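/- arXiv:1908.10095 — 5 statements merged into one kernel-verified Lean document; each statement's English description precedes it below -/
import Mathlib

section
/- Let p be an odd prime, N a positive integer coprime to p, D a positive squarefree integer with p ∤ 2D, j ≥ 1, a an even integer coprime to p, and β = a√(−D)/(2p^j) ∈ ℂ. Let 𝔑 be an ideal of the ring of integers O_F of F = ℚ(√(−D)) with N the positive generator of 𝔑 ∩ ℤ, and γ_β = [[1, β],[0,1]]. Then γ_β^{-1} Γ_0(𝔑) γ_β ∩ SL_2(ℤ) = { [[a,b],[c,d]] ∈ SL_2(ℤ) : a ≡ d mod p^j, c ≡ 0 mod N p^{2j} }. -/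
open Complex Matrix

/-- Let `p` be an odd prime, `N` coprime to `p`, `D > 0` squarefree with `p ∤ 2D`,
`j ≥ 1`, `a` an even integer coprime to `p`, and `β = a√(−D)/(2p^j) ∈ ℂ`.
Let `R ⊆ ℂ` be the ring of integers of `F = ℚ(√(−D))` (so `Re b, Im b/√D ∈ ½ℤ`
for `b ∈ R`, `ℤ ⊆ R` and `√(−D) ∈ R`), and let `𝔑` be an ideal of `R` with
`𝔑 ∩ ℤ = Nℤ`.  Then
`γ_β⁻¹ Γ₀(𝔑) γ_β ∩ SL₂(ℤ) = { [[a,b],[c,d]] ∈ SL₂(ℤ) : a ≡ d [p^j], Np^{2j} ∣ c }`. -/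
theorem conjugated_congruence_subgroup
    (p N D : ℕ) (j : ℕ) (a : ℤ)
    (hp : p.Prime) (hodd : Odd p) (hN : 0 < N) (hNp : Nat.Coprime N p)
    (hD : 0 < D) (hsqfree : Squarefree D) (hpD : ¬ (p : ℤ) ∣ 2 * D)
    (hj : 1 ≤ j) (ha : Even a) (hap : ¬ (p : ℤ) ∣ a)
    (R : Subring ℂ) (𝔑 : Set ℂ)
    -- `R` is the ring of integers of `ℚ(√(−D))`:
    (hZR : ∀ z : ℤ, (z : ℂ) ∈ R)
    (hsqrt : (Real.sqrt D * Complex.I : ℂ) ∈ R)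
    (hhalf : ∀ b ∈ R, (∃ m : ℤ, b.re = m / 2) ∧ (∃ n : ℤ, b.im = n / 2 * Real.sqrt D))
    -- `𝔑` is an ideal of `R` with `𝔑 ∩ ℤ = Nℤ`:
    (h𝔑R : 𝔑 ⊆ (R : Set ℂ))
    (h𝔑add : ∀ x ∈ 𝔑, ∀ y ∈ 𝔑, x + y ∈ 𝔑)
    (h𝔑mul : ∀ r ∈ R, ∀ x ∈ 𝔑, r * x ∈ 𝔑)
    (h𝔑Z : ∀ z : ℤ, (z : ℂ) ∈ 𝔑 ↔ (N : ℤ) ∣ z)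
    (β : ℂ) (hβ : β = (a : ℂ) * (Real.sqrt D * Complex.I) / (2 * (p : ℂ) ^ j)) :
    {g : Matrix (Fin 2) (Fin 2) ℤ | g.det = 1 ∧
        (∀ i k : Fin 2,
          ((!![1, β; 0, 1] : Matrix (Fin 2) (Fin 2) ℂ) * g.map ((↑·) : ℤ → ℂ) *
            !![1, -β; 0, 1]) i k ∈ R) ∧
        ((!![1, β; 0, 1] : Matrix (Fin 2) (Fin 2) ℂ) * g.map ((↑·) : ℤ → ℂ) *
            !![1, -β; 0, 1]) 1 0 ∈ 𝔑}
      = {g : Matrix (Fin 2) (Fin 2) ℤ | g.det = 1 ∧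
          (p : ℤ) ^ j ∣ g 0 0 - g 1 1 ∧ ((N : ℤ) * (p : ℤ) ^ (2 * j)) ∣ g 1 0} := by
  obtain ⟨a', rfl⟩ := ha
  -- basic nonvanishing facts
  have hpjC : ((p : ℂ)) ^ j ≠ 0 := pow_ne_zero _ (Nat.cast_ne_zero.mpr hp.pos.ne')
  have hpjR : ((p : ℝ)) ^ j ≠ 0 := pow_ne_zero _ (Nat.cast_ne_zero.mpr hp.pos.ne')
  have hDR : (0 : ℝ) < D := by exact_mod_cast hD
  have hs : Real.sqrt D ≠ 0 := by positivity
  have hs2 : Real.sqrt D * Real.sqrt D = (D : ℝ) := Real.mul_self_sqrt hDR.le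
  have hs2C : (Real.sqrt D : ℂ) * (Real.sqrt D : ℂ) = (D : ℂ) := by
    rw [← Complex.ofReal_mul, hs2]; norm_num
  have hpZ : Prime ((p : ℤ)) := Nat.prime_iff_prime_int.mp hp
  have hp2 : ¬ (p : ℤ) ∣ 2 := fun h => hpD (h.mul_right D)
  have hpDiv : ¬ (p : ℤ) ∣ (D : ℤ) := fun h => hpD (h.mul_left 2)
  have hpa' : ¬ (p : ℤ) ∣ a' := fun h => hap (h.add h)
  have h2a : ¬ (p : ℤ) ∣ 2 * a' := fun h => by
    rcases hpZ.dvd_mul.mp h with h1 | h1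
    · exact hp2 h1
    · exact hpa' h1
  have h2a2D : ¬ (p : ℤ) ∣ 2 * a' ^ 2 * (D : ℤ) := fun h => by
    rcases hpZ.dvd_mul.mp h with h1 | h1
    · rcases hpZ.dvd_mul.mp h1 with h2 | h2
      · exact hp2 h2
      · exact hpa' (hpZ.dvd_of_dvd_pow h2)
    · exact hpDiv h1
  -- the real number `r` with `β = r I`
  set r : ℝ := (a' : ℝ) * Real.sqrt D / (p : ℝ) ^ j with hrdef
  have hβr : β = ((r : ℝ) : ℂ) * Complex.I := by
    rw [hβ, hrdef]; push_cast; field_simp; ring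
  ext g
  simp only [Set.mem_setOf_eq]
  -- entries of the conjugated matrix
  have hg : g.map ((↑·) : ℤ → ℂ) = !![(g 0 0 : ℂ), g 0 1; g 1 0, g 1 1] := by
    ext i k; fin_cases i <;> fin_cases k <;> simp
  have e00 : ((!![1, β; 0, 1] : Matrix (Fin 2) (Fin 2) ℂ) * g.map ((↑·) : ℤ → ℂ) *
      !![1, -β; 0, 1]) 0 0 = (g 0 0 : ℂ) + β * g 1 0 := by
    rw [hg]; simp [Matrix.mul_fin_two]
  have e01 : ((!![1, β; 0, 1] : Matrix (Fin 2) (Fin 2) ℂ) * g.map ((↑·) : ℤ → ℂ) *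
      !![1, -β; 0, 1]) 0 1 = (g 0 1 : ℂ) + β * g 1 1 - ((g 0 0 : ℂ) + β * g 1 0) * β := by
    rw [hg]; simp [Matrix.mul_fin_two]; ring
  have e10 : ((!![1, β; 0, 1] : Matrix (Fin 2) (Fin 2) ℂ) * g.map ((↑·) : ℤ → ℂ) *
      !![1, -β; 0, 1]) 1 0 = (g 1 0 : ℂ) := by
    rw [hg]; simp [Matrix.mul_fin_two]
  have e11 : ((!![1, β; 0, 1] : Matrix (Fin 2) (Fin 2) ℂ) * g.map ((↑·) : ℤ → ℂ) *
      !![1, -β; 0, 1]) 1 1 = (g 1 1 : ℂ) - (g 1 0 : ℂ) * β := by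
    rw [hg]; simp [Matrix.mul_fin_two]; ring
  -- decompositions into real and imaginary parts
  have d00 : (g 0 0 : ℂ) + β * g 1 0
      = (((g 0 0 : ℤ) : ℝ) : ℂ) + ((r * (g 1 0 : ℤ) : ℝ) : ℂ) * Complex.I := by
    rw [hβr]; push_cast; ring
  have d01 : (g 0 1 : ℂ) + β * g 1 1 - ((g 0 0 : ℂ) + β * g 1 0) * β
      = ((((g 0 1 : ℤ) : ℝ) + r * r * (g 1 0 : ℤ) : ℝ) : ℂ)
        + ((r * (((g 1 1 : ℤ) : ℝ) - ((g 0 0 : ℤ) : ℝ)) : ℝ) : ℂ) * Complex.I := by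
    rw [hβr]; push_cast
    linear_combination (-(r : ℂ) ^ 2 * (g 1 0 : ℤ)) * Complex.I_sq
  constructor
  · rintro ⟨hdet, hRmem, hNmem⟩
    refine ⟨hdet, ?_, ?_⟩
    · -- p^j ∣ g 0 0 - g 1 1, from the imaginary part of the (0,1) entry
      obtain ⟨-, n, hn⟩ := hhalf _ (hRmem 0 1)
      rw [e01, d01] at hn
      simp only [Complex.add_im, Complex.ofReal_im, Complex.mul_im, Complex.ofReal_re,
        Complex.I_im, Complex.I_re, mul_zero, mul_one, zero_add, zero_mul, add_zero] at hn
      -- hn : r * (g 1 1 - g 0 0) = n / 2 * √D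
      have h : (2 * a' * ((g 1 1 : ℤ) - g 0 0) : ℝ) * Real.sqrt D
          = ((n : ℝ) * (p : ℝ) ^ j) * Real.sqrt D := by
        rw [hrdef] at hn
        field_simp at hn
        push_cast
        linear_combination (Real.sqrt D) * hn
      have h2 : (2 * a' * ((g 1 1 : ℤ) - g 0 0) : ℝ) = (n : ℝ) * (p : ℝ) ^ j :=
        mul_right_cancel₀ hs h
      have h3 : 2 * a' * (g 1 1 - g 0 0) = n * (p : ℤ) ^ j := by exact_mod_cast h2
      have hdvd : (p : ℤ) ^ j ∣ 2 * a' * (g 1 1 - g 0 0) := ⟨n, by linarith⟩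
      have hcop : IsCoprime ((p : ℤ) ^ j) (2 * a') :=
        (hpZ.coprime_iff_not_dvd.mpr h2a).pow_left
      have := hcop.dvd_of_dvd_mul_left hdvd
      exact (dvd_sub_comm).mp this
    · -- N p^{2j} ∣ g 1 0
      -- from the norm condition: N ∣ g 1 0
      rw [e10] at hNmem
      have hNdvd : (N : ℤ) ∣ g 1 0 := (h𝔑Z _).mp hNmem
      -- from the real part of the (0,1) entry: p^{2j} ∣ g 1 0
      obtain ⟨⟨m, hm⟩, -⟩ := hhalf _ (hRmem 0 1)
      rw [e01, d01] at hm
      simp only [Complex.add_re, Complex.ofReal_re, Complex.mul_re, Complex.ofReal_im,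
        Complex.I_re, Complex.I_im, mul_zero, zero_mul, mul_one, sub_zero, add_zero,
        zero_sub, neg_zero] at hm
      have h : (2 * a' ^ 2 * (D : ℤ) * (g 1 0) : ℝ)
          = ((m : ℝ) - 2 * (g 0 1 : ℤ)) * (p : ℝ) ^ (2 * j) := by
        rw [hrdef] at hm
        field_simp at hm
        rw [pow_mul, pow_two]
        push_cast
        linear_combination (-2 * (a' : ℝ) ^ 2 * ((g 1 0 : ℤ) : ℝ)) * hs2 + hm
      have h2 : 2 * a' ^ 2 * (D : ℤ) * g 1 0 = (m - 2 * g 0 1) * (p : ℤ) ^ (2 * j) := by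
        exact_mod_cast h
      have hdvd : (p : ℤ) ^ (2 * j) ∣ (2 * a' ^ 2 * (D : ℤ)) * g 1 0 :=
        ⟨m - 2 * g 0 1, by linarith⟩
      have hcop : IsCoprime ((p : ℤ) ^ (2 * j)) (2 * a' ^ 2 * (D : ℤ)) :=
        (hpZ.coprime_iff_not_dvd.mpr h2a2D).pow_left
      have hpdvd : (p : ℤ) ^ (2 * j) ∣ g 1 0 := hcop.dvd_of_dvd_mul_left hdvd
      exact ((Nat.isCoprime_iff_coprime.mpr hNp).pow_right).mul_dvd hNdvd hpdvd
  · rintro ⟨hdet, hd, hc⟩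
    obtain ⟨t, ht⟩ := hd
    obtain ⟨c, hc⟩ := hc
    have htC : (g 1 1 : ℂ) - (g 0 0 : ℂ) = -((p : ℂ) ^ j * t) := by
      have h := congrArg (Int.cast : ℤ → ℂ) ht
      push_cast at h; linear_combination -h
    have hcC : (g 1 0 : ℂ) = (N : ℂ) * (p : ℂ) ^ (2 * j) * c := by
      have h := congrArg (Int.cast : ℤ → ℂ) hc
      push_cast at h; linear_combination h
    -- key membership facts
    have kβC : β * (g 1 0 : ℂ) = ((a' * ((N : ℤ) * (p : ℤ) ^ j * c) : ℤ) : ℂ)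
        * (Real.sqrt D * Complex.I) := by
      rw [hβ, hcC]; push_cast; field_simp; ring
    have mβC : β * (g 1 0 : ℂ) ∈ R := by
      rw [kβC]; exact R.mul_mem (hZR _) hsqrt
    have kβd : β * ((g 1 1 : ℂ) - (g 0 0 : ℂ)) = ((-(a' * t) : ℤ) : ℂ)
        * (Real.sqrt D * Complex.I) := by
      rw [hβ, htC]; push_cast; field_simp; ring
    have kβCβ : β * (g 1 0 : ℂ) * β = ((-(a' ^ 2 * (D : ℤ) * (N : ℤ) * c) : ℤ) : ℂ) := by
      rw [hβ, hcC]; push_cast; field_simp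
      linear_combination (4 * (a' : ℂ) ^ 2 * (N : ℂ) * (p : ℂ) ^ (2 * j) * (c : ℂ)
          * Complex.I ^ 2) * hs2C
        + (4 * (a' : ℂ) ^ 2 * (N : ℂ) * (p : ℂ) ^ (2 * j) * (c : ℂ) * (D : ℂ)) * Complex.I_sq
    refine ⟨hdet, fun i k => ?_, ?_⟩
    · fin_cases i <;> fin_cases k
      · show ((!![1, β; 0, 1] : Matrix (Fin 2) (Fin 2) ℂ) * g.map ((↑·) : ℤ → ℂ) *
            !![1, -β; 0, 1]) 0 0 ∈ R
        rw [e00]; exact R.add_mem (hZR _) mβC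
      · show ((!![1, β; 0, 1] : Matrix (Fin 2) (Fin 2) ℂ) * g.map ((↑·) : ℤ → ℂ) *
            !![1, -β; 0, 1]) 0 1 ∈ R
        rw [e01]
        have hsplit : (g 0 1 : ℂ) + β * g 1 1 - ((g 0 0 : ℂ) + β * g 1 0) * β
            = (g 0 1 : ℂ) + β * ((g 1 1 : ℂ) - (g 0 0 : ℂ)) - β * (g 1 0 : ℂ) * β := by
          ring
        rw [hsplit, kβd, kβCβ]
        exact R.sub_mem (R.add_mem (hZR _) (R.mul_mem (hZR _) hsqrt)) (hZR _)
      · show ((!![1, β; 0, 1] : Matrix (Fin 2) (Fin 2) ℂ) * g.map ((↑·) : ℤ → ℂ) *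
            !![1, -β; 0, 1]) 1 0 ∈ R
        rw [e10]; exact hZR _
      · show ((!![1, β; 0, 1] : Matrix (Fin 2) (Fin 2) ℂ) * g.map ((↑·) : ℤ → ℂ) *
            !![1, -β; 0, 1]) 1 1 ∈ R
        rw [e11]
        have : (g 1 0 : ℂ) * β = β * (g 1 0 : ℂ) := by ring
        rw [this, kβC]
        exact R.sub_mem (hZR _) (R.mul_mem (hZR _) hsqrt)
    · rw [e10]
      exact (h𝔑Z _).mpr ⟨(p : ℤ) ^ (2 * j) * c, by rw [hc]; ring⟩
end

section
/- For Re(μ) > |Re(ν)| and a > 0, the Mellin transform of the modified Bessel function of the second kind satisfies ∫_0^∞ K_ν(at) t^{μ−1} dt = 2^{μ−2} a^{−μ} Γ((μ+ν)/2) Γ((μ−ν)/2). -/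
open Complex

/-- The modified Bessel function of the second kind `K_ν(x)`, for `x > 0`, given by the
standard integral representation `K_ν(x) = ∫_0^∞ e^{−x cosh t} cosh(νt) dt`. -/
noncomputable def besselK (ν : ℂ) (x : ℝ) : ℂ :=
  ∫ t in Set.Ioi (0 : ℝ), Complex.exp (-(x * Real.cosh t)) * Complex.cosh (ν * t)


open MeasureTheory Set

set_option linter.unusedVariables false



lemma cpow_posreal {r : ℝ} (hr : 0 < r) (z : ℂ) :
    (r : ℂ) ^ z = Complex.exp (z * Real.log r) := by
  rw [Complex.cpow_def_of_ne_zero (by exact_mod_cast hr.ne'), ← Complex.ofReal_log hr.le,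
    mul_comm]

lemma norm_cosh_le (z : ℂ) : ‖Complex.cosh z‖ ≤ Real.exp |z.re| := by
  rw [Complex.cosh]
  calc ‖(Complex.exp z + Complex.exp (-z)) / 2‖
      ≤ (‖Complex.exp z‖ + ‖Complex.exp (-z)‖) / 2 := by
        rw [norm_div]
        have : ‖(2:ℂ)‖ = 2 := by norm_num
        rw [this]
        gcongr
        exact norm_add_le _ _
    _ ≤ (Real.exp |z.re| + Real.exp |z.re|) / 2 := by
        rw [Complex.norm_exp, Complex.norm_exp]
        have h1 : Real.exp z.re ≤ Real.exp |z.re| := Real.exp_le_exp.2 (le_abs_self _)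
        have h2 : Real.exp (-z).re ≤ Real.exp |z.re| := by
          simp only [Complex.neg_re]
          exact Real.exp_le_exp.2 (neg_le_abs _)
        linarith
    _ = Real.exp |z.re| := by ring

lemma sliceInt {μ : ℂ} (hμ : 0 < μ.re) {c : ℝ} (hc : 0 < c) :
    IntegrableOn (fun t : ℝ => (t : ℂ) ^ (μ - 1) * Complex.exp (-(c * t))) (Ioi 0) := by
  have h0 := Complex.GammaIntegral_convergent hμ
  have h1 : IntegrableOn (fun t : ℝ => (Real.exp (-(c*t)) : ℂ) * ((c*t : ℝ) : ℂ) ^ (μ - 1)) (Ioi 0) := by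
    have := (integrableOn_Ioi_comp_mul_left_iff
      (fun x : ℝ => ((Real.exp (-x)) : ℂ) * (x : ℂ) ^ (μ - 1)) 0 hc).mpr (by simpa using h0)
    simpa [mul_zero] using this
  have h2 : IntegrableOn (fun t : ℝ => ((c : ℂ) ^ (μ - 1))⁻¹ *
      ((Real.exp (-(c*t)) : ℂ) * ((c*t : ℝ) : ℂ) ^ (μ - 1))) (Ioi 0) := h1.const_mul _
  refine h2.congr_fun (fun t ht => ?_) measurableSet_Ioi
  rw [mem_Ioi] at ht
  have hcz : (c : ℂ) ^ (μ - 1) ≠ 0 := by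
    rw [Ne, Complex.cpow_eq_zero_iff, not_and_or]
    exact Or.inl (by simpa using hc.ne')
  beta_reduce
  rw [Complex.ofReal_mul, mul_cpow_ofReal_nonneg hc.le ht.le, Complex.ofReal_exp]
  push_cast
  field_simp

noncomputable def Fk (ν μ : ℂ) (a t s : ℝ) : ℂ :=
  Complex.exp (-((a * t : ℝ) * Real.cosh s)) * Complex.cosh (ν * s) * (t:ℂ)^(μ-1)

lemma Fk_meas (ν μ : ℂ) (a : ℝ) : AEStronglyMeasurable (Function.uncurry (Fk ν μ a))
    ((volume.restrict (Ioi 0)).prod (volume.restrict (Ioi 0))) := by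
  rw [Measure.prod_restrict]
  refine ContinuousOn.aestronglyMeasurable ?_ (measurableSet_Ioi.prod measurableSet_Ioi)
  have hcont1 : Continuous (fun p : ℝ × ℝ =>
      Complex.exp (-((a * p.1 : ℝ) * Real.cosh p.2)) * Complex.cosh (ν * p.2)) := by
    fun_prop
  have hcont2 : ContinuousOn (fun p : ℝ × ℝ => ((p.1:ℝ):ℂ)^(μ-1)) (Ioi 0 ×ˢ Ioi 0) := by
    apply continuousOn_of_forall_continuousAt
    rintro ⟨t, s⟩ ⟨ht, hs⟩
    have hca : ContinuousAt (fun x : ℝ => (x:ℂ)^(μ-1)) t :=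
      Complex.continuousAt_ofReal_cpow_const t _ (Or.inr (ne_of_gt ht))
    exact hca.comp (x := (t, s)) continuousAt_fst
  exact hcont1.continuousOn.mul hcont2

lemma Fk_slice {ν μ : ℂ} {a : ℝ} (hμ : 0 < μ.re) (ha : 0 < a) (s : ℝ) :
    IntegrableOn (fun t => Fk ν μ a t s) (Ioi 0) := by
  have hc : 0 < a * Real.cosh s := mul_pos ha (Real.cosh_pos s)
  have h1 := (sliceInt hμ hc).mul_const (Complex.cosh (ν * s))
  refine IntegrableOn.congr_fun h1 (fun t ht => ?_) measurableSet_Ioi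
  unfold Fk
  rw [show (-(((a * Real.cosh s : ℝ) : ℂ) * (t:ℂ))) = (-(((a * t : ℝ) : ℂ) * ((Real.cosh s : ℝ) : ℂ)))
    by push_cast; ring]
  ring

lemma Fk_norm_eq {ν μ : ℂ} {a : ℝ} (hμ : 0 < μ.re) (ha : 0 < a) (s : ℝ) :
    (∫ t in Ioi (0:ℝ), ‖Fk ν μ a t s‖)
      = ‖Complex.cosh (ν * s)‖ * ((1 / (a * Real.cosh s)) ^ μ.re * Real.Gamma μ.re) := by
  have hc : 0 < a * Real.cosh s := mul_pos ha (Real.cosh_pos s)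
  rw [← Real.integral_rpow_mul_exp_neg_mul_Ioi hμ hc, ← integral_const_mul]
  refine setIntegral_congr_fun measurableSet_Ioi (fun t ht => ?_)
  rw [mem_Ioi] at ht
  unfold Fk
  rw [norm_mul, norm_mul, Complex.norm_exp,
    Complex.norm_cpow_eq_rpow_re_of_pos ht]
  rw [show (-(((a * t : ℝ) : ℂ) * ((Real.cosh s : ℝ) : ℂ))) = ((-(a * Real.cosh s * t) : ℝ) : ℂ)
    by push_cast; ring]
  rw [Complex.ofReal_re]
  have h2 : (μ - 1).re = μ.re - 1 := by simp
  rw [h2]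
  ring

lemma Fk_norm_int {ν μ : ℂ} {a : ℝ} (ha : 0 < a) (h : |ν.re| < μ.re) :
    Integrable (fun s => ∫ t in Ioi (0:ℝ), ‖Fk ν μ a t s‖) (volume.restrict (Ioi 0)) := by
  have hμ : 0 < μ.re := (abs_nonneg _).trans_lt h
  simp only [Fk_norm_eq hμ ha]
  have hb : 0 < μ.re - |ν.re| := by linarith
  have hg : IntegrableOn (fun s : ℝ =>
      (Real.Gamma μ.re * (2/a) ^ μ.re) * Real.exp (-(μ.re - |ν.re|) * s)) (Ioi 0) :=
    (exp_neg_integrableOn_Ioi 0 hb).const_mul _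
  refine Integrable.mono' hg ?_ ?_
  · -- measurability via continuity
    apply Continuous.aestronglyMeasurable
    apply Continuous.mul
    · fun_prop
    · apply Continuous.mul ?_ continuous_const
      apply Continuous.rpow_const
      · exact continuous_const.div (by fun_prop) (fun s => (mul_pos ha (Real.cosh_pos s)).ne')
      · intro s
        left
        positivity
  · rw [ae_restrict_iff' measurableSet_Ioi]
    filter_upwards with s hs
    rw [mem_Ioi] at hs
    have hnn : 0 ≤ ‖Complex.cosh (ν * s)‖ * ((1 / (a * Real.cosh s)) ^ μ.re * Real.Gamma μ.re) := by
      positivity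
    rw [Real.norm_eq_abs, _root_.abs_of_nonneg hnn]
    have le1 : ‖Complex.cosh (ν * s)‖ ≤ Real.exp (|ν.re| * s) := by
      have := norm_cosh_le (ν * s)
      have hre : (ν * (s:ℂ)).re = ν.re * s := by simp [Complex.mul_re]
      rwa [hre, abs_mul, _root_.abs_of_nonneg hs.le] at this
    have le2 : (1 / (a * Real.cosh s)) ^ μ.re ≤ (2/a) ^ μ.re * Real.exp (-s * μ.re) := by
      have hcosh : Real.exp s / 2 ≤ Real.cosh s := by
        rw [Real.cosh_eq]
        have := Real.exp_pos (-s)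
        linarith
      have hle : 1 / (a * Real.cosh s) ≤ (2/a) * Real.exp (-s) := by
        have hrw : (2/a) * Real.exp (-s) = 1 / (a * Real.exp s / 2) := by
          rw [Real.exp_neg]
          field_simp
        rw [hrw]
        apply one_div_le_one_div_of_le (by positivity)
        nlinarith [hcosh, ha.le]
      calc (1 / (a * Real.cosh s)) ^ μ.re ≤ ((2/a) * Real.exp (-s)) ^ μ.re :=
            Real.rpow_le_rpow (by positivity) hle hμ.le
        _ = (2/a) ^ μ.re * (Real.exp (-s)) ^ μ.re := Real.mul_rpow (by positivity) (by positivity)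
        _ = (2/a) ^ μ.re * Real.exp (-s * μ.re) := by
            rw [Real.rpow_def_of_pos (Real.exp_pos _), Real.log_exp]
    have hΓ : 0 ≤ Real.Gamma μ.re := (Real.Gamma_pos_of_pos hμ).le
    calc ‖Complex.cosh (ν * s)‖ * ((1 / (a * Real.cosh s)) ^ μ.re * Real.Gamma μ.re)
        ≤ Real.exp (|ν.re| * s) * (((2/a) ^ μ.re * Real.exp (-s * μ.re)) * Real.Gamma μ.re) := by
          gcongr
      _ = (Real.Gamma μ.re * (2/a) ^ μ.re) * (Real.exp (|ν.re| * s) * Real.exp (-s * μ.re)) := by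
          ring
      _ = (Real.Gamma μ.re * (2/a) ^ μ.re) * Real.exp (-(μ.re - |ν.re|) * s) := by
          rw [← Real.exp_add]
          ring_nf

lemma Fk_int {ν μ : ℂ} {a : ℝ} (ha : 0 < a) (h : |ν.re| < μ.re) :
    Integrable (Function.uncurry (Fk ν μ a))
      ((volume.restrict (Ioi (0:ℝ))).prod (volume.restrict (Ioi (0:ℝ)))) := by
  have hμ : 0 < μ.re := (abs_nonneg _).trans_lt h
  rw [integrable_prod_iff' (Fk_meas ν μ a)]
  exact ⟨ae_of_all _ (fun s => Fk_slice hμ ha s), Fk_norm_int ha h⟩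

lemma step1 {ν μ : ℂ} {a : ℝ} (ha : 0 < a) (h : |ν.re| < μ.re) :
    (∫ t in Ioi (0:ℝ), besselK ν (a * t) * (t:ℂ) ^ (μ - 1))
      = Complex.Gamma μ * ∫ s in Ioi (0:ℝ),
          Complex.cosh (ν * s) * (1 / ((a * Real.cosh s : ℝ) : ℂ)) ^ μ := by
  have hμ : 0 < μ.re := (abs_nonneg _).trans_lt h
  have h0 : ∀ t : ℝ, besselK ν (a * t) * (t:ℂ) ^ (μ - 1) = ∫ s in Ioi (0:ℝ), Fk ν μ a t s := by
    intro t
    rw [besselK, ← integral_mul_const]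
    rfl
  simp only [h0]
  rw [integral_integral_swap (Fk_int ha h), ← integral_const_mul]
  refine setIntegral_congr_fun measurableSet_Ioi (fun s hs => ?_)
  have hc : 0 < a * Real.cosh s := mul_pos ha (Real.cosh_pos s)
  have hinner : (∫ t in Ioi (0:ℝ), Fk ν μ a t s)
      = (∫ t in Ioi (0:ℝ), (t:ℂ) ^ (μ - 1) * Complex.exp (-(((a * Real.cosh s : ℝ) : ℂ) * (t:ℂ))))
        * Complex.cosh (ν * s) := by
    rw [← integral_mul_const]
    refine setIntegral_congr_fun measurableSet_Ioi (fun t ht => ?_)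
    unfold Fk
    rw [show (-(((a * Real.cosh s : ℝ) : ℂ) * (t:ℂ)))
        = (-(((a * t : ℝ) : ℂ) * ((Real.cosh s : ℝ) : ℂ))) by push_cast; ring]
    ring
  rw [hinner, integral_cpow_mul_exp_neg_mul_Ioi hμ hc]
  ring


noncomputable def phi (s : ℝ) : ℝ := (1 + Real.exp (2*s))⁻¹

lemma phi_deriv (s : ℝ) : HasDerivAt phi (-(2 * Real.exp (2*s)) / (1 + Real.exp (2*s))^2) s := by
  have h1 : HasDerivAt (fun s : ℝ => 1 + Real.exp (2*s)) (2 * Real.exp (2*s)) s := by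
    have : HasDerivAt (fun s : ℝ => Real.exp (2*s)) (Real.exp (2 * s) * (2 * 1)) s :=
      ((hasDerivAt_id s).const_mul 2).exp
    simpa [mul_comm] using this.const_add 1
  have h2 := h1.inv (by positivity)
  exact h2

lemma phi_inj : Function.Injective phi := by
  intro s t hst
  unfold phi at hst
  have h1 : (1:ℝ) + Real.exp (2*s) = 1 + Real.exp (2*t) := inv_injective hst
  have := Real.exp_injective (by linarith : Real.exp (2*s) = Real.exp (2*t))
  linarith

lemma phi_image : phi '' (Ioi 0) = Ioo 0 (1/2 : ℝ) := by
  ext x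
  constructor
  · rintro ⟨s, hs, rfl⟩
    rw [mem_Ioi] at hs
    have h1 : (1:ℝ) < Real.exp (2*s) := by
      rw [show (1:ℝ) = Real.exp 0 by simp]
      exact Real.exp_lt_exp.2 (by linarith)
    constructor
    · unfold phi; positivity
    · unfold phi
      rw [show (1/2 : ℝ) = (2:ℝ)⁻¹ by norm_num]
      exact inv_strictAnti₀ (by norm_num) (by linarith)
  · rintro ⟨hx0, hx2⟩
    have h2 : (2:ℝ) < x⁻¹ := by
      rw [lt_inv_comm₀ (by norm_num) hx0]
      linarith
    have h1 : (1:ℝ) < x⁻¹ - 1 := by linarith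
    refine ⟨Real.log (x⁻¹ - 1) / 2, ?_, ?_⟩
    · rw [mem_Ioi]
      exact div_pos (Real.log_pos h1) two_pos
    · unfold phi
      rw [mul_div_cancel₀ _ (two_ne_zero), Real.exp_log (by linarith)]
      rw [show (1:ℝ) + (x⁻¹ - 1) = x⁻¹ by ring, inv_inv]


lemma pointwise_id {μ ν : ℂ} (s : ℝ) (hs : 0 < s) :
    |(-(2 * Real.exp (2*s)) / (1 + Real.exp (2*s))^2)| •
      ((2:ℂ)^(μ-2) * ((phi s : ℂ)^((μ-ν)/2-1) * (1 - (phi s : ℂ))^((μ+ν)/2-1)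
        + (phi s : ℂ)^((μ+ν)/2-1) * (1 - (phi s : ℂ))^((μ-ν)/2-1)))
      = Complex.cosh (ν * s) * ((Real.cosh s : ℝ) : ℂ)^(-μ) := by
  have hE0 : 0 < Real.exp (2*s) := Real.exp_pos _
  have hE1 : (0:ℝ) < 1 + Real.exp (2*s) := by positivity
  have hx0 : 0 < phi s := by unfold phi; positivity
  have h1x : 1 - phi s = Real.exp (2*s) / (1 + Real.exp (2*s)) := by
    unfold phi; field_simp; ring
  have h1x0 : 0 < 1 - phi s := by rw [h1x]; positivity
  have habs : |(-(2 * Real.exp (2*s)) / (1 + Real.exp (2*s))^2)|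
      = 2 * Real.exp (2*s) / (1 + Real.exp (2*s))^2 := by
    rw [abs_div, abs_neg, _root_.abs_of_nonneg (by positivity : (0:ℝ) ≤ 2 * Real.exp (2*s)), _root_.abs_of_nonneg (by positivity : (0:ℝ) ≤ (1 + Real.exp (2*s))^2)]
  have hlogx : Real.log (phi s) = -(Real.log (1 + Real.exp (2*s))) := by
    unfold phi; rw [Real.log_inv]
  have hlog1x : Real.log (1 - phi s) = 2*s - Real.log (1 + Real.exp (2*s)) := by
    rw [h1x, Real.log_div hE0.ne' hE1.ne', Real.log_exp]
  have hcoshval : Real.cosh s = (1 + Real.exp (2*s)) / (2 * Real.exp s) := by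
    rw [Real.cosh_eq, Real.exp_neg, show 2*s = s + s by ring, Real.exp_add]
    have := (Real.exp_pos s).ne'
    field_simp
    ring
  have hlogcosh : Real.log (Real.cosh s)
      = Real.log (1 + Real.exp (2*s)) - (Real.log 2 + s) := by
    rw [hcoshval, Real.log_div hE1.ne' (by positivity),
      Real.log_mul two_ne_zero (Real.exp_pos s).ne', Real.log_exp]
  have habs2 : (2 * Real.exp (2*s) / (1 + Real.exp (2*s))^2 : ℝ)
      = Real.exp (Real.log 2 + 2*s - 2*Real.log (1 + Real.exp (2*s))) := by
    rw [← Real.exp_log (show (0:ℝ) < 2 * Real.exp (2*s) / (1 + Real.exp (2*s))^2 by positivity)]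
    congr 1
    rw [Real.log_div (by positivity) (by positivity),
      Real.log_mul two_ne_zero hE0.ne', Real.log_pow, Real.log_exp]
    push_cast
    ring
  have h2c : (2:ℂ)^(μ-2) = Complex.exp ((μ-2) * (Real.log 2 : ℝ)) := by
    rw [show (2:ℂ) = ((2:ℝ):ℂ) by norm_num, cpow_posreal two_pos]
  have h1mx : (1:ℂ) - (phi s : ℂ) = ((1 - phi s : ℝ) : ℂ) := by push_cast; ring
  rw [habs, habs2, Complex.real_smul, Complex.ofReal_exp, h2c, h1mx]
  simp only [cpow_posreal hx0, cpow_posreal h1x0, cpow_posreal (Real.cosh_pos s)]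
  rw [hlogx, hlog1x, hlogcosh, Complex.cosh]
  have h2exp : Complex.exp ((Real.log 2 : ℝ) : ℂ) = 2 := by
    rw [← Complex.ofReal_exp, Real.exp_log two_pos]
    norm_num
  have hhalf : ∀ u v w : ℂ, (Complex.exp u + Complex.exp v)/2 * Complex.exp w
      = Complex.exp (u + w - ((Real.log 2 : ℝ) : ℂ))
        + Complex.exp (v + w - ((Real.log 2 : ℝ) : ℂ)) := by
    intro u v w
    rw [Complex.exp_sub, Complex.exp_sub, h2exp, Complex.exp_add, Complex.exp_add]
    ring
  have hLHS : ∀ u v w1 z1 w2 z2 : ℂ, Complex.exp u * (Complex.exp v *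
      (Complex.exp w1 * Complex.exp z1 + Complex.exp w2 * Complex.exp z2))
      = Complex.exp (u+v+w1+z1) + Complex.exp (u+v+w2+z2) := by
    intro u v w1 z1 w2 z2
    simp only [Complex.exp_add]
    ring
  rw [hLHS, hhalf]
  congr 1
  · congr 1
    push_cast
    ring
  · congr 1
    push_cast
    ring

lemma step2 {μ ν : ℂ} :
    (∫ s in Ioi (0:ℝ), Complex.cosh (ν * s) * ((Real.cosh s : ℝ):ℂ)^(-μ))
      = ∫ x in Ioo (0:ℝ) (1/2), (2:ℂ)^(μ-2) *
          ((x:ℂ)^((μ-ν)/2-1) * (1-(x:ℂ))^((μ+ν)/2-1)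
            + (x:ℂ)^((μ+ν)/2-1) * (1-(x:ℂ))^((μ-ν)/2-1)) := by
  rw [← phi_image, integral_image_eq_integral_abs_deriv_smul measurableSet_Ioi
    (fun s _ => (phi_deriv s).hasDerivWithinAt) (phi_inj.injOn)]
  exact (setIntegral_congr_fun measurableSet_Ioi (fun s hs => pointwise_id s hs)).symm

lemma reflect (h : ℝ → ℂ) : ∫ x in Ioo (1/2:ℝ) 1, h x = ∫ x in Ioo (0:ℝ) (1/2), h (1-x) := by
  have himg : (fun x : ℝ => 1 - x) '' Ioo 0 (1/2) = Ioo (1/2) 1 := by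
    rw [Set.image_const_sub_Ioo]
    norm_num
  have hd : ∀ x : ℝ, HasDerivAt (fun y : ℝ => 1 - y) (-1) x := fun x => by
    simpa using (hasDerivAt_id x).const_sub 1
  rw [← himg, integral_image_eq_integral_abs_deriv_smul measurableSet_Ioo
    (fun x _ => (hd x).hasDerivWithinAt)
    (fun x _ y _ hxy => by simpa using hxy) h]
  simp

lemma beta_split {p q : ℂ} (hp : 0 < p.re) (hq : 0 < q.re) :
    (∫ x in Ioo (0:ℝ) (1/2:ℝ),
        ((x:ℂ)^(q-1) * (1-(x:ℂ))^(p-1) + (x:ℂ)^(p-1) * (1-(x:ℂ))^(q-1)))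
      = Complex.betaIntegral p q := by
  have hIpq : IntegrableOn (fun x : ℝ => (x:ℂ)^(p-1) * (1-(x:ℂ))^(q-1)) (Ioc 0 1) := by
    rw [← intervalIntegrable_iff_integrableOn_Ioc_of_le zero_le_one]
    exact Complex.betaIntegral_convergent hp hq
  have hIqp : IntegrableOn (fun x : ℝ => (x:ℂ)^(q-1) * (1-(x:ℂ))^(p-1)) (Ioc 0 1) := by
    rw [← intervalIntegrable_iff_integrableOn_Ioc_of_le zero_le_one]
    exact Complex.betaIntegral_convergent hq hp
  have hsub : Ioo (0:ℝ) (1/2) ⊆ Ioc 0 1 := fun x hx => ⟨hx.1, by linarith [hx.2]⟩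
  have hsub2 : Ioo (1/2:ℝ) 1 ⊆ Ioc 0 1 := fun x hx => ⟨by linarith [hx.1], hx.2.le⟩
  rw [integral_add (hIqp.mono_set hsub) (hIpq.mono_set hsub)]
  have hrefl : (∫ x in Ioo (0:ℝ) (1/2:ℝ), (x:ℂ)^(q-1) * (1-(x:ℂ))^(p-1))
      = ∫ x in Ioo (1/2:ℝ) 1, (x:ℂ)^(p-1) * (1-(x:ℂ))^(q-1) := by
    rw [reflect (fun x : ℝ => (x:ℂ)^(p-1) * (1-(x:ℂ))^(q-1))]
    refine setIntegral_congr_fun measurableSet_Ioo (fun x hx => ?_)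
    push_cast
    rw [sub_sub_cancel]
    ring
  rw [hrefl]
  have hunion : (∫ x in Ioo (1/2:ℝ) 1, (x:ℂ)^(p-1) * (1-(x:ℂ))^(q-1))
      + (∫ x in Ioo (0:ℝ) (1/2:ℝ), (x:ℂ)^(p-1) * (1-(x:ℂ))^(q-1))
      = ∫ x in Ioo (0:ℝ) 1, (x:ℂ)^(p-1) * (1-(x:ℂ))^(q-1) := by
    rw [← Set.Ioo_union_Ico_eq_Ioo (by norm_num : (0:ℝ) < 1/2) (by norm_num : (1/2:ℝ) ≤ 1)]
    have hdisj : Disjoint (Ioo (0:ℝ) (1/2)) (Ico (1/2:ℝ) 1) := by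
      rw [Set.disjoint_left]
      rintro x ⟨_, h2⟩ ⟨h3, _⟩
      linarith
    rw [setIntegral_union hdisj measurableSet_Ico
      (hIpq.mono_set hsub) (by
        rw [IntegrableOn, ← Measure.restrict_congr_set Ioo_ae_eq_Ico]
        exact hIpq.mono_set hsub2)]
    rw [MeasureTheory.integral_Ico_eq_integral_Ioo]
    ring
  rw [hunion, Complex.betaIntegral, intervalIntegral.integral_of_le zero_le_one,
    MeasureTheory.integral_Ioc_eq_integral_Ioo]

/-- **Mellin transform of the Bessel function `K_ν`.**  For `Re μ > |Re ν|` and `a > 0`,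
`∫_0^∞ K_ν(at) t^{μ−1} dt = 2^{μ−2} a^{−μ} Γ((μ+ν)/2) Γ((μ−ν)/2)`. -/
theorem besselK_mellin (ν μ : ℂ) (a : ℝ) (ha : 0 < a) (h : |ν.re| < μ.re) :
    (∫ t in Set.Ioi (0 : ℝ), besselK ν (a * t) * (t : ℂ) ^ (μ - 1))
      = (2 : ℂ) ^ (μ - 2) * (a : ℂ) ^ (-μ) *
        Complex.Gamma ((μ + ν) / 2) * Complex.Gamma ((μ - ν) / 2) := by
  have hμ : 0 < μ.re := (abs_nonneg _).trans_lt h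
  have habs := abs_lt.mp h
  have hp : 0 < ((μ + ν) / 2).re := by
    have : ((μ + ν) / 2).re = (μ.re + ν.re) / 2 := by
      simp [Complex.div_re, Complex.normSq]
    rw [this]
    linarith [habs.1]
  have hq : 0 < ((μ - ν) / 2).re := by
    have : ((μ - ν) / 2).re = (μ.re - ν.re) / 2 := by
      simp [Complex.div_re, Complex.normSq]
    rw [this]
    linarith [habs.2]
  rw [step1 ha h]
  have hpt : ∀ s : ℝ, Complex.cosh (ν * s) * (1 / ((a * Real.cosh s : ℝ) : ℂ)) ^ μ
      = (a:ℂ)^(-μ) * (Complex.cosh (ν * s) * ((Real.cosh s : ℝ):ℂ)^(-μ)) := by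
    intro s
    have hc : 0 < a * Real.cosh s := mul_pos ha (Real.cosh_pos s)
    have h1 : (1 / ((a * Real.cosh s : ℝ):ℂ)) = ((((a * Real.cosh s)⁻¹ : ℝ)):ℂ) := by
      push_cast
      ring
    rw [h1, cpow_posreal (inv_pos.2 hc), cpow_posreal (Real.cosh_pos s), cpow_posreal ha,
      Real.log_inv, Real.log_mul ha.ne' (Real.cosh_pos s).ne']
    rw [show Complex.exp (-μ * (Real.log a : ℝ)) * (Complex.cosh (ν * s)
        * Complex.exp (-μ * (Real.log (Real.cosh s) : ℝ)))
      = Complex.cosh (ν * s) * Complex.exp (-μ * (Real.log a : ℝ)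
          + -μ * (Real.log (Real.cosh s) : ℝ)) by rw [Complex.exp_add]; ring]
    congr 1
    congr 1
    push_cast
    ring
  simp only [hpt]
  rw [integral_const_mul, step2, integral_const_mul, beta_split hp hq]
  have hB := Complex.Gamma_mul_Gamma_eq_betaIntegral hp hq
  rw [show (μ + ν) / 2 + (μ - ν) / 2 = μ by ring] at hB
  linear_combination (-((a:ℂ)^(-μ) * (2:ℂ)^(μ-2))) * hB
end

section
/- Let p be a prime, Y = ℤ_p^×, and 𝒪_p the ring of integers of ℂ_p. Let {f_i} be a family of continuous functions in C(Y, 𝒪_p) whose ℂ_p-linear span is dense in C(Y, ℂ_p), and let {a_i} be elements of 𝒪_p. Then there exists an 𝒪_p-valued measure μ on Y with ∫_Y f_i dμ = a_i for all i if and only if for every choice of elements b_i ∈ ℂ_p, almost all zero, and every n ≥ 0: whenever Σ_i b_i f_i(y) ∈ p^n 𝒪_p for all y ∈ Y, one has Σ_i b_i a_i ∈ p^n 𝒪_p. -/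
set_option maxHeartbeats 1600000


open Finset

/-- **Abstract Kummer congruences.**  Let `p` be a prime, `Y = ℤ_p^×`, and `K` a complete
nonarchimedean field playing the role of `ℂ_p` (with `‖p‖ = 1/p`); its ring of integers
`𝒪_p` is the unit ball.  Let `(f_i)` be a family of continuous `𝒪_p`-valued functions on
`Y` whose `K`-linear span is dense in `C(Y,K)` and `(a_i)` elements of `𝒪_p`.  Then there
is an `𝒪_p`-valued measure `μ` (a bounded linear functional) on `Y` with `∫ f_i dμ = a_i`
for all `i` iff for every finitely supported family `(b_i)` in `K` and every `n ≥ 0`: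
`Σ b_i f_i(y) ∈ p^n 𝒪_p` for all `y ∈ Y` implies `Σ b_i a_i ∈ p^n 𝒪_p`. -/
theorem abstract_kummer_congruences
    (p : ℕ) (hp : p.Prime) [Fact p.Prime]
    (K : Type*) [NontriviallyNormedField K] [CompleteSpace K]
    (hnonarch : ∀ x y : K, ‖x + y‖ ≤ max ‖x‖ ‖y‖)
    (hpnorm : ‖(p : K)‖ = (p : ℝ)⁻¹)
    {ι : Type*} (f : ι → C((ℤ_[p])ˣ, K))
    (hfint : ∀ i, ∀ y, ‖f i y‖ ≤ 1)
    (hdense : Dense ((Submodule.span K (Set.range f) : Submodule K C((ℤ_[p])ˣ, K)) : Set C((ℤ_[p])ˣ, K)))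
    (a : ι → K) (haint : ∀ i, ‖a i‖ ≤ 1) :
    (∃ μ : C((ℤ_[p])ˣ, K) →ₗ[K] K,
        (∀ g : C((ℤ_[p])ˣ, K), (∀ y, ‖g y‖ ≤ 1) → ‖μ g‖ ≤ 1) ∧
        (∀ i, μ (f i) = a i)) ↔
      (∀ b : ι →₀ K, ∀ n : ℕ,
        (∀ y : (ℤ_[p])ˣ, ‖∑ i ∈ b.support, b i * f i y‖ ≤ ((p : ℝ) ^ n)⁻¹) →
          ‖∑ i ∈ b.support, b i * a i‖ ≤ ((p : ℝ) ^ n)⁻¹) := by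
  classical
  haveI : CompactSpace (ℤ_[p]ᵐᵒᵖ) := MulOpposite.opHomeomorph.compactSpace
  haveI : CompactSpace (ℤ_[p])ˣ := by
    have hclosed : IsClosed (Set.range (Units.embedProduct ℤ_[p])) := by
      have heq : Set.range (Units.embedProduct ℤ_[p]) =
          {x : ℤ_[p] × ℤ_[p]ᵐᵒᵖ | x.1 * x.2.unop = 1} ∩
          {x : ℤ_[p] × ℤ_[p]ᵐᵒᵖ | x.2.unop * x.1 = 1} := by
        ext x
        constructor
        · rintro ⟨u, rfl⟩
          exact ⟨u.val_inv, u.inv_val⟩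
        · rintro ⟨h1, h2⟩
          exact ⟨⟨x.1, x.2.unop, h1, h2⟩, Prod.ext rfl (MulOpposite.op_unop x.2)⟩
      rw [heq]
      exact (isClosed_eq (continuous_fst.mul
              (MulOpposite.continuous_unop.comp continuous_snd)) continuous_const).inter
        (isClosed_eq ((MulOpposite.continuous_unop.comp continuous_snd).mul
              continuous_fst) continuous_const)
    exact (Topology.IsClosedEmbedding.mk Units.isEmbedding_embedProduct hclosed).compactSpace
  have hp1 : (1:ℝ) < (p:ℝ) := by exact_mod_cast hp.one_lt
  have hp0 : (0:ℝ) < (p:ℝ) := lt_trans one_pos hp1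
  have hpK : (p : K) ≠ 0 := by
    intro h
    rw [h, norm_zero] at hpnorm
    exact absurd hpnorm.symm (inv_pos.mpr hp0).ne'
  have hnormzpow : ∀ m : ℤ, ‖(p:K)^m‖ = (p:ℝ)^(-m) := by
    intro m
    rw [norm_zpow, hpnorm, inv_zpow, ← zpow_neg]
  set T : (ι →₀ K) →ₗ[K] C((ℤ_[p])ˣ, K) := Finsupp.linearCombination K f with hTdef
  set A : (ι →₀ K) →ₗ[K] K := Finsupp.linearCombination K a with hAdef
  have hTy : ∀ (b : ι →₀ K) (y : (ℤ_[p])ˣ), T b y = ∑ i ∈ b.support, b i * f i y := by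
    intro b y
    rw [hTdef, Finsupp.linearCombination_apply, Finsupp.sum]
    induction b.support using Finset.induction with
    | empty => simp
    | insert _ _ h ih => simp [Finset.sum_insert h, ih]
  have hAb : ∀ b : ι →₀ K, A b = ∑ i ∈ b.support, b i * a i := by
    intro b
    rw [hAdef, Finsupp.linearCombination_apply, Finsupp.sum]
    simp [smul_eq_mul]
  constructor
  · rintro ⟨μ, hμ1, hμf⟩ b n hb
    set g : C((ℤ_[p])ˣ, K) := ∑ i ∈ b.support, b i • f i with hg
    have hgy : ∀ y, g y = ∑ i ∈ b.support, b i * f i y := by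
      intro y
      rw [hg]
      induction b.support using Finset.induction with
      | empty => simp
      | insert _ _ h ih => simp [Finset.sum_insert h, ih]
    have hμg : μ g = ∑ i ∈ b.support, b i * a i := by
      rw [hg, map_sum]
      refine Finset.sum_congr rfl fun i _ => ?_
      rw [map_smul, hμf i, smul_eq_mul]
    have hcnorm : ‖((p:K)^n : K)‖ = ((p:ℝ)^n)⁻¹ := by
      rw [norm_pow, hpnorm, inv_pow]
    have h1 : ∀ y, ‖((((p:K)^n)⁻¹ : K) • g) y‖ ≤ 1 := by
      intro y
      rw [ContinuousMap.smul_apply, norm_smul, norm_inv, hcnorm, inv_inv]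
      calc (p:ℝ)^n * ‖g y‖ ≤ (p:ℝ)^n * ((p:ℝ)^n)⁻¹ := by
            refine mul_le_mul_of_nonneg_left ?_ (by positivity)
            rw [hgy]; exact hb y
        _ = 1 := mul_inv_cancel₀ (by positivity)
    have h2 := hμ1 _ h1
    rw [map_smul, smul_eq_mul, norm_mul, norm_inv, hcnorm, inv_inv] at h2
    rw [← hμg]
    have hpn : (0:ℝ) < (p:ℝ)^n := by positivity
    calc ‖μ g‖ = ((p:ℝ)^n)⁻¹ * ((p:ℝ)^n * ‖μ g‖) := by
          field_simp
      _ ≤ ((p:ℝ)^n)⁻¹ * 1 := by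
          exact mul_le_mul_of_nonneg_left h2 (by positivity)
      _ = ((p:ℝ)^n)⁻¹ := mul_one _
  · intro H
    have key : ∀ (b : ι →₀ K) (k : ℤ),
        (∀ y, ‖T b y‖ ≤ (p:ℝ)^(-k)) → ‖A b‖ ≤ (p:ℝ)^(-k) := by
      intro b k hk
      rcases le_or_gt 0 k with h | h
      · obtain ⟨n, rfl⟩ := Int.eq_ofNat_of_zero_le h
        have hpow : (p:ℝ)^(-(n:ℤ)) = ((p:ℝ)^n)⁻¹ := by
          rw [zpow_neg, zpow_natCast]
        rw [hpow] at hk ⊢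
        rw [hAb]
        refine H b n fun y => ?_
        rw [← hTy]; exact hk y
      · obtain ⟨m, hm⟩ : ∃ m : ℕ, (m:ℤ) = -k := ⟨(-k).toNat, Int.toNat_of_nonneg (by omega)⟩
        set b' : ι →₀ K := (p:K)^m • b with hb'
        have hpm : ((p:K)^m : K) ≠ 0 := pow_ne_zero _ hpK
        have hsupp : b'.support = b.support := by
          rw [hb']
          exact Finsupp.support_smul_eq hpm
        have hb'i : ∀ i, b' i = (p:K)^m * b i := by
          intro i; rw [hb', Finsupp.smul_apply, smul_eq_mul]
        have hnormm : ‖((p:K)^m : K)‖ = ((p:ℝ)^m)⁻¹ := by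
          rw [norm_pow, hpnorm, inv_pow]
        have h0 : ∀ y, ‖∑ i ∈ b'.support, b' i * f i y‖ ≤ ((p:ℝ)^(0:ℕ))⁻¹ := by
          intro y
          rw [hsupp]
          have : ∑ i ∈ b.support, b' i * f i y = (p:K)^m * ∑ i ∈ b.support, b i * f i y := by
            rw [Finset.mul_sum]
            exact Finset.sum_congr rfl fun i _ => by rw [hb'i i, mul_assoc]
          rw [this, norm_mul, hnormm, ← hTy]
          calc ((p:ℝ)^m)⁻¹ * ‖T b y‖ ≤ ((p:ℝ)^m)⁻¹ * (p:ℝ)^(-k) := by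
                refine mul_le_mul_of_nonneg_left (hk y) (by positivity)
            _ = ((p:ℝ)^(0:ℕ))⁻¹ := by
                rw [← zpow_natCast (p:ℝ) m, hm, pow_zero, inv_one, ← zpow_neg, neg_neg,
                  ← zpow_add₀ hp0.ne', add_comm, neg_add_cancel, zpow_zero]
        have h1 := H b' 0 h0
        have h2 : ∑ i ∈ b'.support, b' i * a i = (p:K)^m * A b := by
          rw [hsupp, hAb, Finset.mul_sum]
          exact Finset.sum_congr rfl fun i _ => by rw [hb'i i, mul_assoc]
        rw [h2, norm_mul, hnormm, pow_zero, inv_one] at h1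
        have hfin : ‖A b‖ ≤ (p:ℝ)^m := by
          have hpmpos : (0:ℝ) < (p:ℝ)^m := by positivity
          calc ‖A b‖ = (p:ℝ)^m * (((p:ℝ)^m)⁻¹ * ‖A b‖) := by field_simp
            _ ≤ (p:ℝ)^m * 1 := mul_le_mul_of_nonneg_left h1 (by positivity)
            _ = (p:ℝ)^m := mul_one _
        calc ‖A b‖ ≤ (p:ℝ)^m := hfin
          _ = (p:ℝ)^(-k) := by rw [← zpow_natCast (p:ℝ) m, hm]
    have hspan : (Submodule.span K (Set.range f)) = LinearMap.range T :=
      (Finsupp.range_linearCombination K (v := f)).symm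
    set S := LinearMap.range T with hS
    have hdenseS : Dense (S : Set C((ℤ_[p])ˣ, K)) := by rw [← hspan]; exact hdense
    have hker : LinearMap.ker T ≤ LinearMap.ker A := by
      intro b hb
      rw [LinearMap.mem_ker] at hb ⊢
      by_contra hA0
      have hApos : 0 < ‖A b‖ := norm_pos_iff.mpr hA0
      have hinv : (p:ℝ)⁻¹ < 1 := inv_lt_one_of_one_lt₀ hp1
      obtain ⟨n, hn⟩ := exists_pow_lt_of_lt_one hApos hinv
      have hkey := key b n (fun y => by
        rw [hb]
        simp only [ContinuousMap.zero_apply, norm_zero]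
        positivity)
      rw [zpow_neg, zpow_natCast, ← inv_pow] at hkey
      linarith
    let lam0 : ((ι →₀ K) ⧸ LinearMap.ker T) →ₗ[K] K := (LinearMap.ker T).liftQ A hker
    let lam : S →ₗ[K] K := lam0 ∘ₗ (T.quotKerEquivRange.symm : S →ₗ[K] _)
    have hlamT : ∀ (b : ι →₀ K) (h : T b ∈ S), lam ⟨T b, h⟩ = A b := by
      intro b h
      show lam0 (T.quotKerEquivRange.symm ⟨T b, h⟩) = A b
      rw [LinearMap.quotKerEquivRange_symm_apply_image]
      rfl
    have hlam_bound : ∀ x : S, ‖lam x‖ ≤ (p:ℝ) * ‖x‖ := by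
      rintro ⟨x, hx⟩
      obtain ⟨b, rfl⟩ := hx
      show ‖lam ⟨T b, LinearMap.mem_range_self T b⟩‖ ≤ (p:ℝ) * ‖T b‖
      rw [hlamT]
      show ‖A b‖ ≤ (p:ℝ) * ‖T b‖
      rcases eq_or_ne (T b) 0 with h0 | h0
      · have hA0 : A b = 0 := hker (LinearMap.mem_ker.mpr h0)
        rw [hA0, norm_zero]
        positivity
      · have hr : 0 < ‖T b‖ := norm_pos_iff.mpr h0
        obtain ⟨n, hn1, hn2⟩ := exists_mem_Ioc_zpow hr hp1
        have hkey := key b (-(n+1)) (fun y => by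
          rw [neg_neg]
          exact le_trans ((T b).norm_coe_le_norm y) hn2)
        rw [neg_neg] at hkey
        calc ‖A b‖ ≤ (p:ℝ)^(n+1) := hkey
          _ = (p:ℝ)^n * (p:ℝ) := zpow_add_one₀ hp0.ne' n
          _ ≤ ‖T b‖ * (p:ℝ) := mul_le_mul_of_nonneg_right hn1.le hp0.le
          _ = (p:ℝ) * ‖T b‖ := mul_comm _ _
    let lamc : S →L[K] K := LinearMap.mkContinuous lam (p:ℝ) hlam_bound
    have hdr : DenseRange (S.subtypeL : S → C((ℤ_[p])ˣ, K)) := by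
      show Dense (Set.range _)
      have : Set.range (S.subtypeL : S → C((ℤ_[p])ˣ, K)) = (S : Set C((ℤ_[p])ˣ, K)) :=
        Subtype.range_coe
      rw [this]
      exact hdenseS
    have hui : IsUniformInducing (S.subtypeL : S → C((ℤ_[p])ˣ, K)) :=
      isUniformEmbedding_subtype_val.isUniformInducing
    let μ : C((ℤ_[p])ˣ, K) →L[K] K := lamc.extend S.subtypeL
    have hμS : ∀ (x : C((ℤ_[p])ˣ, K)) (h : x ∈ S), μ x = lam ⟨x, h⟩ := by
      intro x h
      have h1 := ContinuousLinearMap.extend_eq lamc hdr hui ⟨x, h⟩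
      have h2 : S.subtypeL (⟨x, h⟩ : S) = x := rfl
      rw [h2] at h1
      rw [h1]
      rfl
    refine ⟨μ.toLinearMap, ?_, ?_⟩
    · intro g hg
      have hg1 : ‖g‖ ≤ 1 := (ContinuousMap.norm_le g zero_le_one).mpr hg
      refine le_of_forall_pos_le_add fun ε hε => ?_
      set δ := min 1 (ε / (‖μ‖ + 1)) with hδ
      have hμ0 : (0:ℝ) ≤ ‖μ‖ := norm_nonneg _
      have hδpos : 0 < δ := lt_min one_pos (div_pos hε (by positivity))
      obtain ⟨x, hxS, hdist⟩ : ∃ x ∈ (S : Set C((ℤ_[p])ˣ, K)), dist g x < δ :=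
        Metric.mem_closure_iff.mp (hdenseS g) δ hδpos
      obtain ⟨b, rfl⟩ := hxS
      have hdist' : ‖T b - g‖ < δ := by
        rw [← dist_eq_norm, dist_comm]
        exact hdist
      have hxle : ∀ y, ‖T b y‖ ≤ (p:ℝ)^(-(0:ℤ)) := by
        intro y
        have heq : T b y = g y + (T b - g) y := by
          rw [ContinuousMap.sub_apply]; ring
        rw [heq]
        refine le_trans (hnonarch _ _) ?_
        rw [neg_zero, zpow_zero]
        refine max_le (hg y) ?_
        refine le_trans ((T b - g).norm_coe_le_norm y) ?_
        exact le_trans hdist'.le (min_le_left _ _)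
      have hAb1 : ‖A b‖ ≤ 1 := by
        have := key b 0 hxle
        rwa [neg_zero, zpow_zero] at this
      have hμx : μ (T b) = A b := by
        rw [hμS (T b) (LinearMap.mem_range_self T b)]
        exact hlamT b _
      have hμgsplit : ‖μ g‖ ≤ ‖μ (g - T b)‖ + ‖μ (T b)‖ := by
        calc ‖μ g‖ = ‖μ (g - T b) + μ (T b)‖ := by rw [← map_add, sub_add_cancel]
          _ ≤ _ := norm_add_le _ _
      have hδ2 : δ ≤ ε / (‖μ‖ + 1) := min_le_right _ _
      have h3 : ‖μ (g - T b)‖ ≤ ε := by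
        calc ‖μ (g - T b)‖ ≤ ‖μ‖ * ‖g - T b‖ := μ.le_opNorm _
          _ ≤ ‖μ‖ * δ := by
              refine mul_le_mul_of_nonneg_left ?_ hμ0
              rw [← neg_sub, norm_neg]
              exact hdist'.le
          _ ≤ ‖μ‖ * (ε / (‖μ‖ + 1)) := mul_le_mul_of_nonneg_left hδ2 hμ0
          _ ≤ (‖μ‖ + 1) * (ε / (‖μ‖ + 1)) := by
              refine mul_le_mul_of_nonneg_right (by linarith) (by positivity)
          _ = ε := by field_simp
      calc ‖μ.toLinearMap g‖ = ‖μ g‖ := rfl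
        _ ≤ ‖μ (g - T b)‖ + ‖μ (T b)‖ := hμgsplit
        _ ≤ ε + 1 := add_le_add h3 (by rw [hμx]; exact hAb1)
        _ = 1 + ε := add_comm _ _
    · intro i
      have hT1 : T (Finsupp.single i 1) = f i := by
        rw [hTdef, Finsupp.linearCombination_single, one_smul]
      have hmem : f i ∈ S := by
        rw [← hT1]
        exact LinearMap.mem_range_self T _
      show μ (f i) = a i
      rw [hμS (f i) hmem]
      have hsub : (⟨f i, hmem⟩ : S) = ⟨T (Finsupp.single i 1), LinearMap.mem_range_self T _⟩ :=
        Subtype.ext hT1.symm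
      rw [hsub, hlamT, hAdef, Finsupp.linearCombination_single, one_smul]
end

section
/- Let n ≥ 0 and A an O_F-algebra, and let L(n̲, A) denote polynomials in (X, Y, X̄, Ȳ) homogeneous of degree n in (X,Y) and of degree n in (X̄,Ȳ). Let ∇ = ∂²/(∂X ∂Ȳ) − ∂²/(∂X̄ ∂Y). For β ∈ ℂ let γ_β = [[1,β],[0,1]] act by P ↦ P(X, Y − βX, X̄, Ȳ + β̄X̄). Then for a monomial X^{n−k}Y^k X̄^{n−l}Ȳ^l one has ∇(γ_β^{−1}·X^{n−k}Y^k X̄^{n−l}Ȳ^l) = l·∂/∂X[X^{n−k}(Y−βX)^k X̄^{n−l}(Ȳ+β̄X̄)^{l−1}] − k·∂/∂X̄[X^{n−k}(Y−βX)^{k−1} X̄^{n−l}(Ȳ+β̄X̄)^l]. Consequently, if β has denominator p^j (i.e., p^jβ is integral over the coefficient ring) and P ∈ L(n̲, 𝒪_E), then ∇^m(γ_β^{−1}·P), restricted to X̄=X, Ȳ=Y, lies in L(2n−2m, p^{−j(2n−m)}𝒪_E), for 0 ≤ m ≤ n, assuming p > n. -/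
open MvPolynomial

namespace AsaiNabla

/-- Variables: `X = X 0`, `Y = X 1`, `X̄ = X 2`, `Ȳ = X 3`. The Clebsch–Gordan operator
`∇ = ∂²/(∂X∂Ȳ) − ∂²/(∂X̄∂Y)`. -/
noncomputable def nabla : MvPolynomial (Fin 4) ℂ →ₗ[ℂ] MvPolynomial (Fin 4) ℂ :=
  ((pderiv (0 : Fin 4)).toLinearMap ∘ₗ (pderiv (3 : Fin 4)).toLinearMap) -
    ((pderiv (2 : Fin 4)).toLinearMap ∘ₗ (pderiv (1 : Fin 4)).toLinearMap)

/-- The action of `γ_β⁻¹` by substitution `P ↦ P(X, Y − βX, X̄, Ȳ + β̄X̄)`. -/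
noncomputable def gammaBetaInv (β : ℂ) :
    MvPolynomial (Fin 4) ℂ →ₐ[ℂ] MvPolynomial (Fin 4) ℂ :=
  aeval ![X 0, X 1 - C β * X 0, X 2, X 3 + C ((starRingEnd ℂ) β) * X 2]

/-- The restriction `X̄ = X`, `Ȳ = Y`. -/
noncomputable def restrictDiag :
    MvPolynomial (Fin 4) ℂ →ₐ[ℂ] MvPolynomial (Fin 4) ℂ :=
  aeval ![X 0, X 1, X 0, X 1]

/-! ### Auxiliary: graded `𝒪`-lattices of scaled monomials -/

/-- The scaled monomial generator: weight `s` allows a denominator `p^{j s}`, discounted by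
`p^{j}` for each power of `Y = X 1` or `Ȳ = X 3`. -/
noncomputable def gen (p j s : ℕ) (μ : Fin 4 →₀ ℕ) : MvPolynomial (Fin 4) ℂ :=
  ((p : ℂ) ^ (j * (μ 1 + μ 3)) / (p : ℂ) ^ (j * s)) • monomial μ 1

/-- The `𝒪`-lattice spanned by the scaled monomials of weight `s`. -/
noncomputable def Mmod (𝒪 : Subring ℂ) (p j s : ℕ) : Submodule 𝒪 (MvPolynomial (Fin 4) ℂ) :=
  Submodule.span 𝒪 (Set.range (gen p j s))

variable {𝒪 : Subring ℂ} {p j : ℕ}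

lemma subring_smul (z : 𝒪) (Q : MvPolynomial (Fin 4) ℂ) : z • Q = (z : ℂ) • Q := by
  rw [← algebraMap_smul ℂ z Q]; rfl

lemma gen_mem (s : ℕ) (μ : Fin 4 →₀ ℕ) : gen p j s μ ∈ Mmod 𝒪 p j s :=
  Submodule.subset_span ⟨μ, rfl⟩

lemma smul_mem_Mmod {s : ℕ} {z : ℂ} (hz : z ∈ 𝒪) {Q} (hQ : Q ∈ Mmod 𝒪 p j s) :
    z • Q ∈ Mmod 𝒪 p j s := by
  have := (Mmod 𝒪 p j s).smul_mem ⟨z, hz⟩ hQ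
  rwa [subring_smul] at this

lemma Mmod_mono (hp0 : (p : ℂ) ≠ 0) {s t : ℕ} (hst : s ≤ t) :
    Mmod 𝒪 p j s ≤ Mmod 𝒪 p j t := by
  rw [Mmod, Submodule.span_le]
  rintro _ ⟨μ, rfl⟩
  have key : gen p j s μ = ((p : ℂ) ^ (j * (t - s))) • gen p j t μ := by
    rw [gen, gen, smul_smul]
    congr 1
    rw [mul_div_assoc', div_eq_div_iff (pow_ne_zero _ hp0) (pow_ne_zero _ hp0),
      ← pow_add, ← pow_add, ← pow_add]
    congr 1
    have : j * s + j * (t - s) = j * t := by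
      rw [← Nat.mul_add]; congr 1; omega
    omega
  rw [key]
  exact smul_mem_Mmod (by exact_mod_cast natCast_mem 𝒪 (p ^ (j * (t - s)))) (gen_mem t μ)

lemma gen_mul (s t : ℕ) (μ ν : Fin 4 →₀ ℕ) :
    gen p j s μ * gen p j t ν = gen p j (s + t) (μ + ν) := by
  rw [gen, gen, gen, smul_mul_smul_comm, monomial_mul, one_mul]
  congr 1
  rw [div_mul_div_comm, ← pow_add, ← pow_add]
  congr 2
  · simp only [Finsupp.add_apply]; ring
  · ring

lemma mul_mem_Mmod {s t : ℕ} {a b : MvPolynomial (Fin 4) ℂ}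
    (ha : a ∈ Mmod 𝒪 p j s) (hb : b ∈ Mmod 𝒪 p j t) : a * b ∈ Mmod 𝒪 p j (s + t) := by
  induction ha using Submodule.span_induction with
  | mem x hx =>
    obtain ⟨μ, rfl⟩ := hx
    induction hb using Submodule.span_induction with
    | mem y hy =>
      obtain ⟨ν, rfl⟩ := hy
      rw [gen_mul]
      exact gen_mem _ _
    | zero => rw [mul_zero]; exact zero_mem _
    | add y z _ _ hy hz => rw [mul_add]; exact add_mem hy hz
    | smul c y _ hy => rw [mul_smul_comm]; exact Submodule.smul_mem _ c hy
  | zero => rw [zero_mul]; exact zero_mem _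
  | add x y _ _ hx hy => rw [add_mul]; exact add_mem hx hy
  | smul c x _ hx => rw [smul_mul_assoc]; exact Submodule.smul_mem _ c hx

lemma one_mem_Mmod : (1 : MvPolynomial (Fin 4) ℂ) ∈ Mmod 𝒪 p j 0 := by
  have : (1 : MvPolynomial (Fin 4) ℂ) = gen p j 0 0 := by
    simp [gen, monomial_zero']
  rw [this]; exact gen_mem _ _

lemma pow_mem_Mmod {s : ℕ} {a : MvPolynomial (Fin 4) ℂ} (ha : a ∈ Mmod 𝒪 p j s) :
    ∀ k : ℕ, a ^ k ∈ Mmod 𝒪 p j (k * s)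
  | 0 => by simpa using one_mem_Mmod
  | (k + 1) => by
    have := mul_mem_Mmod (pow_mem_Mmod ha k) ha
    rw [← pow_succ] at this
    have e : k * s + s = (k + 1) * s := by ring
    rwa [e] at this

lemma X0_mem : (X 0 : MvPolynomial (Fin 4) ℂ) ∈ Mmod 𝒪 p j 0 := by
  have : (X 0 : MvPolynomial (Fin 4) ℂ) = gen p j 0 (Finsupp.single 0 1) := by
    simp [gen, X, Finsupp.single_apply]
  rw [this]; exact gen_mem _ _

lemma X2_mem : (X 2 : MvPolynomial (Fin 4) ℂ) ∈ Mmod 𝒪 p j 0 := by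
  have : (X 2 : MvPolynomial (Fin 4) ℂ) = gen p j 0 (Finsupp.single 2 1) := by
    simp [gen, X, Finsupp.single_apply]
  rw [this]; exact gen_mem _ _

lemma X1_mem (hp0 : (p : ℂ) ≠ 0) : (X 1 : MvPolynomial (Fin 4) ℂ) ∈ Mmod 𝒪 p j 1 := by
  have : (X 1 : MvPolynomial (Fin 4) ℂ) = gen p j 1 (Finsupp.single 1 1) := by
    simp [gen, X, Finsupp.single_apply]
    rw [div_self (pow_ne_zero _ hp0), one_smul]
  rw [this]; exact gen_mem _ _

lemma X3_mem (hp0 : (p : ℂ) ≠ 0) : (X 3 : MvPolynomial (Fin 4) ℂ) ∈ Mmod 𝒪 p j 1 := by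
  have : (X 3 : MvPolynomial (Fin 4) ℂ) = gen p j 1 (Finsupp.single 3 1) := by
    simp [gen, X, Finsupp.single_apply]
    rw [div_self (pow_ne_zero _ hp0), one_smul]
  rw [this]; exact gen_mem _ _

lemma CX_mem (hp0 : (p : ℂ) ≠ 0) {β : ℂ} (hβ : (p : ℂ) ^ j * β ∈ 𝒪) (i : Fin 4)
    (hi : i = 0 ∨ i = 2) : C β * (X i : MvPolynomial (Fin 4) ℂ) ∈ Mmod 𝒪 p j 1 := by
  have e : gen p j 1 (Finsupp.single i 1) = ((p : ℂ) ^ j)⁻¹ • (X i : MvPolynomial (Fin 4) ℂ) := by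
    rw [gen]
    rcases hi with rfl | rfl <;> simp [X, Finsupp.single_apply, one_div]
  have key : C β * (X i : MvPolynomial (Fin 4) ℂ)
      = ((p : ℂ) ^ j * β) • (((p : ℂ) ^ j)⁻¹ • (X i : MvPolynomial (Fin 4) ℂ)) := by
    rw [smul_smul, ← smul_eq_C_mul]
    congr 1
    field_simp
  rw [key, ← e]
  exact smul_mem_Mmod hβ (gen_mem _ _)

lemma pderiv_even_mem {i : Fin 4} (hi : i = 0 ∨ i = 2) {s : ℕ} {Q : MvPolynomial (Fin 4) ℂ}
    (hQ : Q ∈ Mmod 𝒪 p j s) : pderiv i Q ∈ Mmod 𝒪 p j s := by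
  induction hQ using Submodule.span_induction with
  | mem x hx =>
    obtain ⟨μ, rfl⟩ := hx
    have h1 : ((μ - Finsupp.single i 1 : Fin 4 →₀ ℕ) 1) = μ 1 := by
      rcases hi with rfl | rfl <;> simp [Finsupp.tsub_apply, Finsupp.single_apply]
    have h3 : ((μ - Finsupp.single i 1 : Fin 4 →₀ ℕ) 3) = μ 3 := by
      rcases hi with rfl | rfl <;> simp [Finsupp.tsub_apply, Finsupp.single_apply]
    have key : pderiv i (gen p j s μ)
        = ((μ i : ℂ)) • gen p j s (μ - Finsupp.single i 1) := by
      rw [gen, Derivation.map_smul, pderiv_monomial, one_mul, gen, smul_smul,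
        smul_monomial, smul_monomial, smul_eq_mul, smul_eq_mul, mul_one, h1, h3, mul_comm]
    rw [key]
    exact smul_mem_Mmod (by exact_mod_cast natCast_mem 𝒪 (μ i)) (gen_mem _ _)
  | zero => rw [map_zero]; exact zero_mem _
  | add x y _ _ hx hy => rw [map_add]; exact add_mem hx hy
  | smul c x _ hx =>
    rw [subring_smul, Derivation.map_smul, ← subring_smul]
    exact Submodule.smul_mem _ _ hx

lemma pderiv_odd_mem (hp0 : (p : ℂ) ≠ 0) {i : Fin 4} (hi : i = 1 ∨ i = 3) {s : ℕ}
    {Q : MvPolynomial (Fin 4) ℂ} (hQ : Q ∈ Mmod 𝒪 p j (s + 1)) :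
    pderiv i Q ∈ Mmod 𝒪 p j s := by
  induction hQ using Submodule.span_induction with
  | mem x hx =>
    obtain ⟨μ, rfl⟩ := hx
    by_cases h0 : μ i = 0
    · rw [gen, Derivation.map_smul, pderiv_monomial, one_mul, h0, Nat.cast_zero, monomial_zero,
        smul_zero]
      exact zero_mem _
    · have hsub1 : ((μ - Finsupp.single i 1 : Fin 4 →₀ ℕ) 1) +
          ((μ - Finsupp.single i 1 : Fin 4 →₀ ℕ) 3) + 1 = μ 1 + μ 3 := by
        rcases hi with rfl | rfl <;>
          simp only [Finsupp.tsub_apply, Finsupp.single_apply] <;> simp <;> omega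
      have key : pderiv i (gen p j (s + 1) μ)
          = ((μ i : ℂ)) • gen p j s (μ - Finsupp.single i 1) := by
        rw [gen, Derivation.map_smul, pderiv_monomial, one_mul, gen, smul_smul,
          smul_monomial, smul_monomial, smul_eq_mul, smul_eq_mul, mul_one, mul_comm]
        congr 1
        congr 1
        rw [div_eq_div_iff (pow_ne_zero _ hp0) (pow_ne_zero _ hp0), ← pow_add, ← pow_add]
        congr 1
        rw [← hsub1]
        ring
      rw [key]
      exact smul_mem_Mmod (by exact_mod_cast natCast_mem 𝒪 (μ i)) (gen_mem _ _)
  | zero => rw [map_zero]; exact zero_mem _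
  | add x y _ _ hx hy => rw [map_add]; exact add_mem hx hy
  | smul c x _ hx =>
    rw [subring_smul, Derivation.map_smul, ← subring_smul]
    exact Submodule.smul_mem _ _ hx

lemma monomial_eq_prod (μ : Fin 4 →₀ ℕ) (c : ℂ) :
    monomial μ c = C c * (X 0 ^ (μ 0) * X 1 ^ (μ 1) * X 2 ^ (μ 2) * X 3 ^ (μ 3)) := by
  rw [monomial_eq, Finsupp.prod_pow, Fin.prod_univ_four]

lemma restrictDiag_monomial (μ : Fin 4 →₀ ℕ) :
    restrictDiag (monomial μ (1 : ℂ))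
      = monomial (Finsupp.single 0 (μ 0 + μ 2) + Finsupp.single 1 (μ 1 + μ 3)) 1 := by
  rw [monomial_eq_prod, map_mul, map_mul, map_mul, map_mul, map_pow, map_pow, map_pow, map_pow]
  simp only [restrictDiag, aeval_X, aeval_C, Matrix.cons_val_zero, Matrix.cons_val_one,
    Matrix.head_cons, Matrix.cons_val_two, Matrix.tail_cons, Matrix.cons_val_three, map_one]
  rw [one_mul]
  rw [show (X 0 : MvPolynomial (Fin 4) ℂ) ^ (μ 0) * X 1 ^ (μ 1) * X 0 ^ (μ 2) * X 1 ^ (μ 3)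
      = X 0 ^ (μ 0 + μ 2) * X 1 ^ (μ 1 + μ 3) from by rw [pow_add, pow_add]; ring]
  rw [X_pow_eq_monomial, X_pow_eq_monomial, monomial_mul, one_mul]

lemma extract (hp0 : (p : ℂ) ≠ 0) {s : ℕ} {Q : MvPolynomial (Fin 4) ℂ}
    (hQ : Q ∈ Mmod 𝒪 p j s) (mono : Fin 4 →₀ ℕ) :
    (p : ℂ) ^ (j * s) * coeff mono (restrictDiag Q) ∈ 𝒪 := by
  induction hQ using Submodule.span_induction with
  | mem x hx =>
    obtain ⟨μ, rfl⟩ := hx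
    rw [gen, map_smul, restrictDiag_monomial, coeff_smul, smul_eq_mul, coeff_monomial]
    split_ifs with h
    · rw [mul_one, mul_comm, div_mul_cancel₀ _ (pow_ne_zero _ hp0)]
      exact_mod_cast natCast_mem 𝒪 (p ^ (j * (μ 1 + μ 3)))
    · rw [mul_zero, mul_zero]; exact zero_mem _
  | zero => rw [map_zero, coeff_zero, mul_zero]; exact zero_mem _
  | add x y _ _ hx hy => rw [map_add, coeff_add, mul_add]; exact add_mem hx hy
  | smul c x _ hx =>
    rw [subring_smul, map_smul, coeff_smul, smul_eq_mul, mul_left_comm]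
    exact mul_mem c.2 hx

lemma gamma_monomial_mem (hp0 : (p : ℂ) ≠ 0) {β : ℂ}
    (hβ : (p : ℂ) ^ j * β ∈ 𝒪) (hβbar : (p : ℂ) ^ j * (starRingEnd ℂ) β ∈ 𝒪) {n : ℕ}
    (μ : Fin 4 →₀ ℕ) (hμ1 : μ 1 ≤ n) (hμ3 : μ 3 ≤ n) {c : ℂ} (hc : c ∈ 𝒪) :
    gammaBetaInv β (monomial μ c) ∈ Mmod 𝒪 p j (2 * n) := by
  have himg : gammaBetaInv β (monomial μ c)
      = c • (X 0 ^ (μ 0) * (X 1 - C β * X 0) ^ (μ 1) * X 2 ^ (μ 2)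
          * (X 3 + C ((starRingEnd ℂ) β) * X 2) ^ (μ 3)) := by
    rw [monomial_eq_prod, map_mul, map_mul, map_mul, map_mul, map_pow, map_pow, map_pow, map_pow]
    simp only [gammaBetaInv, aeval_X, aeval_C, Matrix.cons_val_zero, Matrix.cons_val_one,
      Matrix.head_cons, Matrix.cons_val_two, Matrix.tail_cons, Matrix.cons_val_three]
    rw [smul_eq_C_mul, algebraMap_eq]
  rw [himg]
  apply smul_mem_Mmod hc
  have m0 : (X 0 : MvPolynomial (Fin 4) ℂ) ^ (μ 0) ∈ Mmod 𝒪 p j (μ 0 * 0) :=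
    pow_mem_Mmod X0_mem _
  have m1 : ((X 1 : MvPolynomial (Fin 4) ℂ) - C β * X 0) ^ (μ 1) ∈ Mmod 𝒪 p j (μ 1 * 1) :=
    pow_mem_Mmod (sub_mem (X1_mem hp0) (CX_mem hp0 hβ 0 (Or.inl rfl))) _
  have m2 : (X 2 : MvPolynomial (Fin 4) ℂ) ^ (μ 2) ∈ Mmod 𝒪 p j (μ 2 * 0) :=
    pow_mem_Mmod X2_mem _
  have m3 : ((X 3 : MvPolynomial (Fin 4) ℂ) + C ((starRingEnd ℂ) β) * X 2) ^ (μ 3)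
      ∈ Mmod 𝒪 p j (μ 3 * 1) :=
    pow_mem_Mmod (add_mem (X3_mem hp0) (CX_mem hp0 hβbar 2 (Or.inr rfl))) _
  exact Mmod_mono hp0 (by omega) (mul_mem_Mmod (mul_mem_Mmod (mul_mem_Mmod m0 m1) m2) m3)

/-- **`∇` lowers denominators.**  (1) On monomials,
`∇(γ_β⁻¹·X^{n−k}Y^kX̄^{n−l}Ȳ^l) = l·∂_X[X^{n−k}(Y−βX)^kX̄^{n−l}(Ȳ+β̄X̄)^{l−1}]
  − k·∂_X̄[X^{n−k}(Y−βX)^{k−1}X̄^{n−l}(Ȳ+β̄X̄)^l]`.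
(2) Consequently, if `p > n`, `p^jβ` and `p^jβ̄` are integral, and `P ∈ L(n̲, 𝒪_E)`,
then `∇^m(γ_β⁻¹·P)|_{X̄=X,Ȳ=Y} ∈ L(2n−2m, p^{−j(2n−m)}𝒪_E)` for `0 ≤ m ≤ n`. -/
theorem nabla_gammaBetaInv
    (n p j : ℕ) (hp : p.Prime) (hpn : n < p) (β : ℂ)
    (𝒪 : Subring ℂ)
    (hβ : (p : ℂ) ^ j * β ∈ 𝒪) (hβbar : (p : ℂ) ^ j * (starRingEnd ℂ) β ∈ 𝒪) :
    -- (1) the derivative identity on monomials: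
    (∀ k l : ℕ, k ≤ n → l ≤ n →
      nabla (gammaBetaInv β (X 0 ^ (n - k) * X 1 ^ k * X 2 ^ (n - l) * X 3 ^ l))
        = (l : ℂ) • pderiv (0 : Fin 4)
            (X 0 ^ (n - k) * (X 1 - C β * X 0) ^ k * X 2 ^ (n - l) *
              (X 3 + C ((starRingEnd ℂ) β) * X 2) ^ (l - 1))
          - (k : ℂ) • pderiv (2 : Fin 4)
            (X 0 ^ (n - k) * (X 1 - C β * X 0) ^ (k - 1) * X 2 ^ (n - l) *
              (X 3 + C ((starRingEnd ℂ) β) * X 2) ^ l)) ∧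
    -- (2) the integrality consequence:
    (∀ P : MvPolynomial (Fin 4) ℂ,
      (∀ m ∈ P.support, m 0 + m 1 = n ∧ m 2 + m 3 = n) →
      (∀ m, coeff m P ∈ 𝒪) →
      ∀ m : ℕ, m ≤ n → ∀ mono : Fin 4 →₀ ℕ,
        (p : ℂ) ^ (j * (2 * n - m)) *
            coeff mono (restrictDiag ((fun Q => nabla Q)^[m] (gammaBetaInv β P))) ∈ 𝒪) := by
  have hp0 : (p : ℂ) ≠ 0 := by exact_mod_cast hp.ne_zero
  constructor
  · intro k l hk hl
    have e03 : pderiv (3:Fin 4) (X 0 : MvPolynomial (Fin 4) ℂ) = 0 := pderiv_X_of_ne (by decide)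
    have e13 : pderiv (3:Fin 4) (X 1 : MvPolynomial (Fin 4) ℂ) = 0 := pderiv_X_of_ne (by decide)
    have e23 : pderiv (3:Fin 4) (X 2 : MvPolynomial (Fin 4) ℂ) = 0 := pderiv_X_of_ne (by decide)
    have e01 : pderiv (1:Fin 4) (X 0 : MvPolynomial (Fin 4) ℂ) = 0 := pderiv_X_of_ne (by decide)
    have e21 : pderiv (1:Fin 4) (X 2 : MvPolynomial (Fin 4) ℂ) = 0 := pderiv_X_of_ne (by decide)
    have e31 : pderiv (1:Fin 4) (X 3 : MvPolynomial (Fin 4) ℂ) = 0 := pderiv_X_of_ne (by decide)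
    have himg : gammaBetaInv β (X 0 ^ (n - k) * X 1 ^ k * X 2 ^ (n - l) * X 3 ^ l)
        = X 0 ^ (n - k) * (X 1 - C β * X 0) ^ k * X 2 ^ (n - l) *
          (X 3 + C ((starRingEnd ℂ) β) * X 2) ^ l := by
      simp only [gammaBetaInv, map_mul, map_pow, aeval_X]
      norm_num [Matrix.cons_val_zero, Matrix.cons_val_one, Matrix.head_cons,
        Matrix.cons_val_two, Matrix.tail_cons, Matrix.cons_val_three]
    have h3 : pderiv (3 : Fin 4) (X 0 ^ (n - k) * (X 1 - C β * X 0) ^ k * X 2 ^ (n - l) *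
          (X 3 + C ((starRingEnd ℂ) β) * X 2) ^ l)
        = (l : ℂ) • (X 0 ^ (n - k) * (X 1 - C β * X 0) ^ k * X 2 ^ (n - l) *
          (X 3 + C ((starRingEnd ℂ) β) * X 2) ^ (l - 1)) := by
      simp only [pderiv_mul, pderiv_pow, map_add, map_sub, pderiv_X_self, pderiv_C_mul,
        e03, e13, e23, e01, e21, e31]
      rw [pderiv_C, pderiv_C, smul_eq_C_mul, map_natCast]
      ring
    have h1 : pderiv (1 : Fin 4) (X 0 ^ (n - k) * (X 1 - C β * X 0) ^ k * X 2 ^ (n - l) *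
          (X 3 + C ((starRingEnd ℂ) β) * X 2) ^ l)
        = (k : ℂ) • (X 0 ^ (n - k) * (X 1 - C β * X 0) ^ (k - 1) * X 2 ^ (n - l) *
          (X 3 + C ((starRingEnd ℂ) β) * X 2) ^ l) := by
      simp only [pderiv_mul, pderiv_pow, map_add, map_sub, pderiv_X_self, pderiv_C_mul,
        e03, e13, e23, e01, e21, e31]
      rw [pderiv_C, pderiv_C, smul_eq_C_mul, map_natCast]
      ring
    rw [himg]
    simp only [nabla, LinearMap.sub_apply, LinearMap.comp_apply, Derivation.coeFn_coe, h3, h1,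
      map_smul]
  · intro P hsupp hcoeff m hm mono
    have base : gammaBetaInv β P ∈ Mmod 𝒪 p j (2 * n) := by
      rw [P.as_sum, map_sum]
      refine Submodule.sum_mem _ fun μ hμ => ?_
      obtain ⟨h01, h23⟩ := hsupp μ hμ
      exact gamma_monomial_mem hp0 hβ hβbar μ (by omega) (by omega) (hcoeff μ)
    have iter : ∀ i : ℕ, i ≤ n →
        (fun Q => nabla Q)^[i] (gammaBetaInv β P) ∈ Mmod 𝒪 p j (2 * n - i) := by
      intro i
      induction i with
      | zero => intro _; simpa using base
      | succ i ih =>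
        intro hi
        have h1 := ih (le_trans (Nat.le_succ i) hi)
        rw [show 2 * n - i = (2 * n - (i + 1)) + 1 from by omega] at h1
        rw [Function.iterate_succ_apply']
        show nabla _ ∈ _
        have hnab : ∀ Q : MvPolynomial (Fin 4) ℂ,
            nabla Q = pderiv 0 (pderiv 3 Q) - pderiv 2 (pderiv 1 Q) := fun Q => rfl
        rw [hnab]
        exact sub_mem
          (pderiv_even_mem (Or.inl rfl) (pderiv_odd_mem hp0 (Or.inr rfl) h1))
          (pderiv_even_mem (Or.inr rfl) (pderiv_odd_mem hp0 (Or.inl rfl) h1))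
    exact extract hp0 (iter m hm) mono

end AsaiNabla
end

section
/- Let N ≥ 1, p an odd prime with p ∤ N, j ≥ 0, and k ≥ 4 even. Consider the Eisenstein series E_k^β(0,z) = Σ_{(c,d) ∈ Λ} (cz+d)^{−k}, where Λ = {(c,d) ∈ ℤ²∖{0} : gcd(c,d)=1, c ≡ 0 mod Np^{2j}, d ≡ ±1 mod p^j}/{±1}. Then the constant term a₀ of its q-expansion at the cusp ∞ equals 1. (The proof expresses E_k^β as (1/2)Σ_{v ≡ ±1 mod p^j} Σ_l ζ_+^l(k,μ) G_k^{(0,l^{−1}v)}, writes ζ^v(k) and ζ_+^l(k,μ) in terms of Dirichlet L-values and their inverses via character orthogonality, and observes that the L-values cancel.) -/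
open Complex Filter

/-- **The constant term of `E_k^β(0,z)` equals 1.**  Let `N ≥ 1`, `p` an odd prime with
`p ∤ N`, `j ≥ 0` and `k ≥ 4` even.  The Eisenstein series
`E_k^β(0,z) = Σ_{(c,d) ∈ Λ} (cz+d)^{−k}` with
`Λ = {(c,d) ≠ (0,0) : gcd(c,d)=1, Np^{2j} ∣ c, d ≡ ±1 mod p^j}/{±1}` (realized below as
half the sum over the unquotiented set, which is legitimate since `k` is even) has
constant term `a₀ = 1` in its `q`-expansion at the cusp `∞`: that is,
`E_k^β(0, it) → 1` as `t → ∞`. -/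
theorem eisenstein_constant_term_eq_one
    (N p j k : ℕ) (hN : 1 ≤ N) (hp : p.Prime) (hodd : Odd p) (hNp : ¬ p ∣ N)
    (hk : 4 ≤ k) (hkeven : Even k) :
    Tendsto
      (fun t : ℝ =>
        (1 / 2 : ℂ) *
          ∑' x : {cd : ℤ × ℤ // cd ≠ (0, 0) ∧ IsCoprime cd.1 cd.2 ∧
              ((N : ℤ) * (p : ℤ) ^ (2 * j)) ∣ cd.1 ∧
              ((p : ℤ) ^ j ∣ cd.2 - 1 ∨ (p : ℤ) ^ j ∣ cd.2 + 1)},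
            (((x.1.1 : ℂ) * (t * I) + (x.1.2 : ℂ)) ^ k)⁻¹)
      atTop (nhds 1) := by
  set S := {cd : ℤ × ℤ // cd ≠ (0, 0) ∧ IsCoprime cd.1 cd.2 ∧
      ((N : ℤ) * (p : ℤ) ^ (2 * j)) ∣ cd.1 ∧
      ((p : ℤ) ^ j ∣ cd.2 - 1 ∨ (p : ℤ) ^ j ∣ cd.2 + 1)} with hS
  -- the two special points
  have h1 : ((0, 1) : ℤ × ℤ) ≠ (0, 0) ∧ IsCoprime (0:ℤ) 1 ∧
      ((N : ℤ) * (p : ℤ) ^ (2 * j)) ∣ 0 ∧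
      ((p : ℤ) ^ j ∣ (1:ℤ) - 1 ∨ (p : ℤ) ^ j ∣ (1:ℤ) + 1) := by
    refine ⟨by simp, isCoprime_zero_left.2 isUnit_one, dvd_zero _, Or.inl (by simp)⟩
  have h2 : ((0, -1) : ℤ × ℤ) ≠ (0, 0) ∧ IsCoprime (0:ℤ) (-1) ∧
      ((N : ℤ) * (p : ℤ) ^ (2 * j)) ∣ 0 ∧
      ((p : ℤ) ^ j ∣ (-1:ℤ) - 1 ∨ (p : ℤ) ^ j ∣ (-1:ℤ) + 1) := by
    refine ⟨by simp, isCoprime_zero_left.2 isUnit_one.neg, dvd_zero _, Or.inr (by simp)⟩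
  set e₁ : S := ⟨(0, 1), h1⟩ with he₁
  set e₂ : S := ⟨(0, -1), h2⟩ with he₂
  -- limit function
  set g : S → ℂ := fun x => if x.1.1 = 0 then 1 else 0 with hg
  -- bound function
  set M : S → ℝ := fun x => (max x.1.1.natAbs x.1.2.natAbs : ℕ) with hM
  have hM1 : ∀ x : S, 1 ≤ M x := by
    intro x
    have : ¬ (x.1.1.natAbs = 0 ∧ x.1.2.natAbs = 0) := by
      rintro ⟨a, b⟩
      exact x.2.1 (Prod.ext (Int.natAbs_eq_zero.1 a) (Int.natAbs_eq_zero.1 b))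
    have h' : 1 ≤ max x.1.1.natAbs x.1.2.natAbs := by omega
    simp only [hM]
    exact_mod_cast h'
  set bound : S → ℝ := fun x => (M x ^ k)⁻¹ with hbound
  have hksum : (2 : ℝ) < (k : ℝ) := by exact_mod_cast by omega
  have hsum : Summable bound := by
    have base : Summable fun v : Fin 2 → ℤ => ‖v‖ ^ (-(k:ℝ)) :=
      EisensteinSeries.summable_one_div_norm_rpow hksum
    have hinj : Function.Injective (fun x : S => ![x.1.1, x.1.2]) := by
      intro x y h
      refine Subtype.ext (Prod.ext ?_ ?_)
      · exact congrFun h 0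
      · exact congrFun h 1
    have := base.comp_injective hinj
    refine this.congr fun x => ?_
    simp only [Function.comp_apply]
    rw [EisensteinSeries.norm_eq_max_natAbs]
    simp only [Matrix.cons_val_zero, Matrix.cons_val_one, Matrix.head_cons]
    rw [Real.rpow_neg (by positivity), Real.rpow_natCast]
  -- key norm lower bound
  have key : ∀ (x : S) (t : ℝ), 1 ≤ t →
      M x ≤ ‖(x.1.1 : ℂ) * (t * I) + (x.1.2 : ℂ)‖ := by
    intro x t ht
    set z := (x.1.1 : ℂ) * (t * I) + (x.1.2 : ℂ) with hz
    have hre : z.re = (x.1.2 : ℝ) := by simp [hz]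
    have him : z.im = (x.1.1 : ℝ) * t := by simp [hz]
    have h1 : |(x.1.2 : ℝ)| ≤ ‖z‖ := by rw [← hre]; exact Complex.abs_re_le_norm z
    have h2 : |(x.1.1 : ℝ)| ≤ ‖z‖ := by
      calc |(x.1.1 : ℝ)| = |(x.1.1 : ℝ)| * 1 := by ring
        _ ≤ |(x.1.1 : ℝ)| * t := by nlinarith [abs_nonneg (x.1.1 : ℝ)]
        _ = |(x.1.1 : ℝ) * t| := by rw [abs_mul, _root_.abs_of_nonneg (by linarith : (0:ℝ) ≤ t)]
        _ ≤ ‖z‖ := him ▸ Complex.abs_im_le_norm z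
    have hMx : M x = max |(x.1.1 : ℝ)| |(x.1.2 : ℝ)| := by
      simp [hM, Nat.cast_max, Nat.cast_natAbs, Int.cast_abs]
    rw [hMx]
    exact max_le h2 h1
  have hbnd : ∀ᶠ t : ℝ in atTop, ∀ x : S,
      ‖(((x.1.1 : ℂ) * (t * I) + (x.1.2 : ℂ)) ^ k)⁻¹‖ ≤ bound x := by
    filter_upwards [eventually_ge_atTop (1:ℝ)] with t ht x
    rw [norm_inv, norm_pow]
    have h0 : 0 < M x := lt_of_lt_of_le one_pos (hM1 x)
    have := key x t ht
    apply inv_anti₀ (by positivity)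
    exact pow_le_pow_left₀ (le_of_lt h0) this k
  -- pointwise limits
  have hab : ∀ x : S, Tendsto (fun t : ℝ =>
      (((x.1.1 : ℂ) * (t * I) + (x.1.2 : ℂ)) ^ k)⁻¹) atTop (nhds (g x)) := by
    intro x
    by_cases hc : x.1.1 = 0
    · -- d = ±1, constant function 1
      have hd : x.1.2 = 1 ∨ x.1.2 = -1 := by
        have := x.2.2.1
        rw [hc] at this
        rcases Int.isUnit_iff.1 (isCoprime_zero_left.1 this) with h | h
        exacts [Or.inl h, Or.inr h]
      have : ∀ t : ℝ, (((x.1.1 : ℂ) * (t * I) + (x.1.2 : ℂ)) ^ k)⁻¹ = 1 := by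
        intro t
        rcases hd with h | h <;>
          simp [hc, h, hkeven.neg_one_pow]
      simp only [this, hg, if_pos hc]
      exact tendsto_const_nhds
    · -- c ≠ 0
      simp only [hg, if_neg hc]
      rw [tendsto_zero_iff_norm_tendsto_zero]
      have hcpos : (0:ℝ) < |(x.1.1 : ℝ)| := by
        simp only [abs_pos]
        exact_mod_cast fun h => hc (by exact_mod_cast h)
      have hlim : Tendsto (fun t : ℝ => ((|(x.1.1:ℝ)| * t) ^ k)⁻¹) atTop (nhds 0) := by
        apply Tendsto.inv_tendsto_atTop
        exact (tendsto_pow_atTop (n := k) (by omega)).comp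
          (tendsto_id.const_mul_atTop hcpos)
      apply squeeze_zero_norm' _ hlim
      filter_upwards [eventually_ge_atTop (1:ℝ)] with t ht
      rw [norm_norm, norm_inv, norm_pow]
      have hz : |(x.1.1:ℝ)| * t ≤ ‖(x.1.1 : ℂ) * (t * I) + (x.1.2 : ℂ)‖ := by
        have him : ((x.1.1 : ℂ) * (t * I) + (x.1.2 : ℂ)).im = (x.1.1 : ℝ) * t := by simp
        calc |(x.1.1:ℝ)| * t = |(x.1.1:ℝ) * t| := by
              rw [abs_mul, _root_.abs_of_nonneg (by linarith : (0:ℝ) ≤ t)]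
          _ ≤ _ := him ▸ Complex.abs_im_le_norm _
      apply inv_anti₀ (by positivity)
      exact pow_le_pow_left₀ (by positivity) hz k
  have main := tendsto_tsum_of_dominated_convergence hsum hab hbnd
  -- compute tsum g
  have hne : e₁ ≠ e₂ := by
    intro h
    have := congrArg (fun x : S => x.1.2) h
    simp [he₁, he₂] at this
  have htsum : ∑' x : S, g x = 2 := by
    rw [tsum_eq_sum (s := {e₁, e₂}) ?_]
    · rw [Finset.sum_insert (by simp [hne]), Finset.sum_singleton]
      simp [hg, he₁, he₂]
      norm_num
    · intro x hx
      simp only [Finset.mem_insert, Finset.mem_singleton] at hx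
      push_neg at hx
      simp only [hg]
      rw [if_neg]
      intro hc
      have hd : x.1.2 = 1 ∨ x.1.2 = -1 := by
        have := x.2.2.1
        rw [hc] at this
        rcases Int.isUnit_iff.1 (isCoprime_zero_left.1 this) with h | h
        exacts [Or.inl h, Or.inr h]
      rcases hd with h | h
      · exact hx.1 (Subtype.ext (Prod.ext hc h))
      · exact hx.2 (Subtype.ext (Prod.ext hc h))
  rw [htsum] at main
  have := main.const_mul (1/2 : ℂ)
  simpa using this
end
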